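/- arXiv:2508.05942 — 9 statements merged into one kernel-verified Lean document; each statement's English description precedes it below -/
import Mathlib

section
/- Let b ≥ 3 be an integer such that b+1 is not a power of 2, let α be a nonzero integer, and let q ≥ 5 be a prime. Suppose given: (i) integers r_{(j,0,0)} for 1 ≤ j ≤ q and r_{(j,0,1)} for 0 ≤ j ≤ q such that {r_{(j,0,0)} (mod 2^j) : 1 ≤ j ≤ q} ∪ {r_{(j,0,1)} (mod 2^j·q) : 0 ≤ j ≤ q} is a covering system of the integers; (ii) integers r_{(j,k,j')} for 0 ≤ j ≤ q, 1 ≤ k ≤ q, 0 ≤ j' ≤ 1 such that {r_{(j,k,j')} (mod 2^j·3^k·q^{j'})} is a covering system of the integers; and (iii) primes p_{(j,0,j')} and p_{(j,k,j')} (over the respective index ranges), pairwise distinct across both systems, such that each such prime indexed by exponent triple (j,k,j') is a primitive prime divisor of b^{2^j·3^k·q^{j'}} − 1 (with k = 0 for the first system). Let P_max be the maximum of all these primes and let M be the least common multiple of 2^q, 3^q, b−1, q, and all of the primes. Then there exists an integer T such that for every positive integer t with t ≡ T (mod M) and (t·b^t + α)·b + 1 ≥ P_max, the number t·b^t + α is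 a b-Brier number. -/
/-- An integer `m` is composite if `m > 1` and `m` is not prime. -/
def IsComposite (m : ℤ) : Prop := 1 < m ∧ ¬ Prime m

/-- `p` is a primitive prime divisor of `b ^ w - 1`. -/
def IsPrimitivePrimeDiv (b : ℤ) (w : ℕ) (p : ℕ) : Prop :=
  p.Prime ∧ (p : ℤ) ∣ b ^ w - 1 ∧ ∀ ℓ : ℕ, 1 ≤ ℓ → ℓ < w → ¬ (p : ℤ) ∣ b ^ ℓ - 1

/-- `k` is a `b`-Sierpiński number: a positive integer with `gcd (k+1) (b-1) = 1`
such that `k * b ^ n + 1` is composite for all positive integers `n`. -/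
def IsBSierpinski (b k : ℤ) : Prop :=
  0 < k ∧ Int.gcd (k + 1) (b - 1) = 1 ∧ ∀ n : ℕ, 0 < n → IsComposite (k * b ^ n + 1)

/-- `k` is a `b`-Riesel number: a positive integer with `gcd (k-1) (b-1) = 1`
such that `k * b ^ n - 1` is composite for all positive integers `n`. -/
def IsBRiesel (b k : ℤ) : Prop :=
  0 < k ∧ Int.gcd (k - 1) (b - 1) = 1 ∧ ∀ n : ℕ, 0 < n → IsComposite (k * b ^ n - 1)

/-- `k` is a `b`-Brier number: both `b`-Sierpiński and `b`-Riesel. -/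
def IsBBrier (b k : ℤ) : Prop := IsBSierpinski b k ∧ IsBRiesel b k

/-!
Write `k = t b^t + α`. Modulo a prime `p_x` of the data, `b` has order exactly `w_x`, so
`p_x ∣ k b^n ± 1` depends only on `n mod w_x`, and at a single exponent `ρ_x` it can be forced by
a congruence on `t`: once `t mod w_x` is fixed, `k ≡ t b^(t mod w_x) + α` is linear in
`t mod p_x`. The Chinese remainder theorem combines these congruences with `t ≡ -α (mod b - 1)`,
which gives `b - 1 ∣ k`. Since `3` and `q` may themselves be among the primes, the residue of `t`
is fixed in three rounds, each time modulo primes whose orders divide the modulus already fixed: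
first modulo `lcm(2^q, b - 1)` and the prime `3`, then modulo `3^q` and the prime `q`, then modulo
`q` and the remaining primes. Signing one covering `+1` and the other `-1`, every `k b^n + 1`
and every `k b^n - 1` gets a prime factor from the list, which is proper once `k b + 1 ≥ P_max`,
except possibly at `n = 1`; that case is excluded by choosing which covering gets which sign.
-/

theorem exists_natCast_modEq (a : ℤ) {n : ℕ} (hn : n ≠ 0) : ∃ m : ℕ, (m : ℤ) ≡ a [ZMOD n] :=
  ⟨(a % n).toNat, by
    rw [Int.toNat_of_nonneg (Int.emod_nonneg a (by exact_mod_cast hn))]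
    exact Int.mod_modEq a n⟩

theorem Nat.Coprime.lcm_right {k m n : ℕ} (hm : k.Coprime m) (hn : k.Coprime n) :
    k.Coprime (m.lcm n) :=
  (hm.mul_right hn).coprime_dvd_right (Nat.lcm_dvd_mul m n)

theorem isComposite_of_prime_dvd {p : ℕ} {m : ℤ} (hp : p.Prime) (hdvd : (p : ℤ) ∣ m)
    (hlt : (p : ℤ) < m) : IsComposite m := by
  have hp1 : (1 : ℤ) < p := by exact_mod_cast hp.one_lt
  refine ⟨hp1.trans hlt, fun hm => hlt.ne ?_⟩
  exact Int.eq_of_associated_of_nonneg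
    ((Nat.prime_iff_prime_int.mp hp).associated_of_dvd hm hdvd) (by omega) (by omega)

theorem gcd_add_one_eq_one_of_dvd {d k : ℤ} (h : d ∣ k) : Int.gcd (k + 1) d = 1 := by
  obtain ⟨m, rfl⟩ := h
  exact Int.isCoprime_iff_gcd_eq_one.mp ⟨1, -m, by ring⟩

theorem gcd_sub_one_eq_one_of_dvd {d k : ℤ} (h : d ∣ k) : Int.gcd (k - 1) d = 1 := by
  obtain ⟨m, rfl⟩ := h
  exact Int.isCoprime_iff_gcd_eq_one.mp ⟨-1, m, by ring⟩

theorem sub_one_dvd_mul_pow_add {b t α : ℤ} (n : ℕ) (h : t ≡ -α [ZMOD b - 1]) :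
    b - 1 ∣ t * b ^ n + α := by
  rw [show t * b ^ n + α = t * (b ^ n - 1) + (t - -α) by ring]
  exact dvd_add (dvd_mul_of_dvd_right (sub_one_dvd_pow_sub_one b n) _) h.symm.dvd

namespace IsPrimitivePrimeDiv

variable {b : ℤ} {w p : ℕ}

theorem orderOf_eq (h : IsPrimitivePrimeDiv b w p) (hw : 0 < w) : orderOf (b : ZMod p) = w := by
  obtain ⟨-, hdvd, hprim⟩ := h
  have hpow : (b : ZMod p) ^ w = 1 := by
    rw [← sub_eq_zero]
    exact_mod_cast (ZMod.intCast_zmod_eq_zero_iff_dvd _ p).mpr hdvd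
  have hfin : IsOfFinOrder (b : ZMod p) := isOfFinOrder_iff_pow_eq_one.mpr ⟨w, hw, hpow⟩
  refine (Nat.le_of_dvd hw (orderOf_dvd_of_pow_eq_one hpow)).antisymm (not_lt.mp fun hlt => ?_)
  refine hprim _ hfin.orderOf_pos hlt ?_
  rw [← ZMod.intCast_zmod_eq_zero_iff_dvd]
  push_cast
  rw [pow_orderOf_eq_one, sub_self]

theorem dvd_sub_one (h : IsPrimitivePrimeDiv b w p) (hw : 0 < w) : w ∣ p - 1 := by
  have := Fact.mk h.1
  rw [← h.orderOf_eq hw]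
  refine ZMod.orderOf_dvd_card_sub_one fun hb => ?_
  have := h.orderOf_eq hw
  rw [hb, orderOf_zero] at this
  omega

theorem ne_two (h : IsPrimitivePrimeDiv b w p) (hw : 1 < w) : p ≠ 2 := by
  rintro rfl
  have := Nat.le_of_dvd one_pos (h.dvd_sub_one (by omega))
  omega

theorem not_dvd_sub_one (h : IsPrimitivePrimeDiv b w p) (hw : 1 < w) : ¬ (p : ℤ) ∣ b - 1 := by
  simpa using h.2.2 1 le_rfl hw

theorem dvd_mul_pow_add_of_modEq (h : IsPrimitivePrimeDiv b w p) (hw : 0 < w) {k e : ℤ}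
    {m n : ℕ} (hdvd : (p : ℤ) ∣ k * b ^ m + e) (hmn : (m : ℤ) ≡ n [ZMOD w]) :
    (p : ℤ) ∣ k * b ^ n + e := by
  have hmn' : m ≡ n [MOD orderOf (b : ZMod p)] := by
    rw [h.orderOf_eq hw]
    exact Int.natCast_modEq_iff.mp hmn
  rw [← ZMod.intCast_zmod_eq_zero_iff_dvd] at hdvd ⊢
  push_cast at hdvd ⊢
  rwa [← pow_mod_orderOf, ← hmn', pow_mod_orderOf]

theorem coprime_lcm_two_pow (h : IsPrimitivePrimeDiv b w p) (hw : 1 < w) (hb : 1 ≤ b) (n : ℕ) :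
    p.Coprime (Nat.lcm (2 ^ n) (b - 1).toNat) := by
  refine Nat.Coprime.lcm_right
    (((Nat.coprime_primes h.1 Nat.prime_two).mpr (h.ne_two hw)).pow_right n)
    ((Nat.Prime.coprime_iff_not_dvd h.1).mpr fun hdvd => h.not_dvd_sub_one hw ?_)
  rw [← Int.toNat_of_nonneg (by omega : 0 ≤ b - 1)]
  exact_mod_cast hdvd

end IsPrimitivePrimeDiv

theorem exists_forall_dvd_mul_pow_add {p : ℕ} [Fact p.Prime] {b : ℤ} (hb : (b : ZMod p) ≠ 0)
    (α ε : ℤ) (ρ c : ℕ) :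
    ∃ d : ℕ, ∀ t : ℕ, t ≡ c [MOD orderOf (b : ZMod p)] → t ≡ d [MOD p] →
      (p : ℤ) ∣ (t * b ^ t + α) * b ^ ρ + ε := by
  -- modulo `p` the condition reads `(t * b ^ c + α) * b ^ ρ + ε = 0`, which is linear in `t`
  refine ⟨((-ε * ((b : ZMod p) ^ ρ)⁻¹ - α) * ((b : ZMod p) ^ c)⁻¹ : ZMod p).val,
    fun t htc htd => ?_⟩
  rw [← ZMod.natCast_eq_natCast_iff, ZMod.natCast_zmod_val] at htd
  rw [← ZMod.intCast_zmod_eq_zero_iff_dvd]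
  push_cast
  rw [← pow_mod_orderOf, htc, pow_mod_orderOf, htd]
  field_simp
  ring

theorem exists_modEq_forall_dvd {ι : Type*} (b α : ℤ) (p ρ : ι → ℕ) (ε : ι → ℤ) {S : Finset ι}
    (P : ι → Prop) [DecidablePred P] {N : ℕ} (c : ℕ) (hp : ∀ i ∈ S, (p i).Prime)
    (hinj : Set.InjOn p S) (hN : ∀ i ∈ S, P i → (p i).Coprime N ∧ orderOf (b : ZMod (p i)) ∣ N) :
    ∃ T : ℕ, T ≡ c [MOD N] ∧ ∀ L t : ℕ, N ∣ L → (∀ i ∈ S, P i → p i ∣ L) → t ≡ T [MOD L] →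
      ∀ i ∈ S, P i → (p i : ℤ) ∣ (t * b ^ t + α) * b ^ ρ i + ε i := by
  have step : ∀ i ∈ S.filter P, ∃ d : ℕ, ∀ t : ℕ, t ≡ c [MOD orderOf (b : ZMod (p i))] →
      t ≡ d [MOD p i] → (p i : ℤ) ∣ (t * b ^ t + α) * b ^ ρ i + ε i := by
    intro i hi
    obtain ⟨hiS, hiP⟩ := Finset.mem_filter.mp hi
    have := Fact.mk (hp i hiS)
    refine exists_forall_dvd_mul_pow_add (fun hb0 => (hp i hiS).ne_one ?_) α (ε i) (ρ i) c
    have hN0 := (hN i hiS hiP).2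
    rw [hb0, orderOf_zero, zero_dvd_iff] at hN0
    exact Nat.coprime_zero_right _ |>.mp (hN0 ▸ (hN i hiS hiP).1)
  -- every order divides `N`, so the residues `d i` are determined by `c` alone
  choose! d hd using step
  have hpF : ∀ i ∈ S.filter P, (p i).Prime := fun i hi => hp i (Finset.mem_filter.mp hi).1
  have hinjF : Set.InjOn p (S.filter P) :=
    hinj.mono (Finset.coe_subset.mpr (Finset.filter_subset _ _))
  obtain ⟨K, hK⟩ := Nat.chineseRemainderOfFinset d p (S.filter P) (fun i hi => (hpF i hi).ne_zero)
    fun i hi j hj hij => (Nat.coprime_primes (hpF i hi) (hpF j hj)).mpr (hinjF.ne hi hj hij)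
  have hcop : N.Coprime (∏ i ∈ S.filter P, p i) := Nat.Coprime.prod_right fun i hi =>
    (hN i (Finset.mem_filter.mp hi).1 (Finset.mem_filter.mp hi).2).1.symm
  obtain ⟨T, hTc, hTK⟩ := Nat.chineseRemainder hcop c K
  refine ⟨T, hTc, fun L t hNL hpL htT i hiS hiP => ?_⟩
  have hi : i ∈ S.filter P := Finset.mem_filter.mpr ⟨hiS, hiP⟩
  refine hd i hi t (((htT.of_dvd hNL).trans hTc).of_dvd (hN i hiS hiP).2) ?_
  exact ((htT.of_dvd (hpL i hiS hiP)).trans (hTK.of_dvd (Finset.dvd_prod_of_mem p hi))).trans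
    (hK i hi)

theorem lt_mul_pow_sub_one {b k : ℤ} {n : ℕ} (hb : 3 ≤ b) (hk : 0 < k) (hn : 2 ≤ n) :
    k * b + 1 < k * b ^ n - 1 := by
  have hkb : 0 < k * b := mul_pos hk (by omega)
  have h2 : k * b ^ 2 ≤ k * b ^ n :=
    mul_le_mul_of_nonneg_left (pow_le_pow_right₀ (by omega) hn) hk.le
  nlinarith

theorem lt_mul_add_one_of_le {b k : ℤ} {p P : ℕ} (hpP : p ≤ P) (hPk : (P : ℤ) ≤ k * b + 1)
    (hsign : p = P → ¬ b ∣ (P : ℤ) - 1) : (p : ℤ) < k * b + 1 := by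
  have hpP' : (p : ℤ) ≤ P := by exact_mod_cast hpP
  exact lt_of_le_of_ne (hpP'.trans hPk) fun h => hsign (by omega) ⟨k, by linarith⟩

theorem prime_lt_mul_sub_one {b k : ℤ} {p₁ p₂ P : ℕ} (hb : 3 ≤ b) (hP : P.Prime)
    (hp₁ : p₁.Prime) (hPodd : Odd P) (hp₂odd : Odd p₂) (hp₂P : p₂ ≤ P)
    (hPk : (P : ℤ) ≤ k * b + 1) (h₁ : (p₁ : ℤ) ∣ k * b + 1) (h₂ : (p₂ : ℤ) ∣ k * b - 1)
    (hsign₁ : p₁ = P → ¬ b ∣ (P : ℤ) - 1) (hsign₂ : p₂ = P → b ∣ (P : ℤ) - 1) :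
    (p₂ : ℤ) < k * b - 1 := by
  have hP3 : 3 ≤ P := by
    obtain ⟨a, ha⟩ := hPodd
    have := hP.two_le
    omega
  have hpos : 0 < k * b - 1 := by
    have : (3 : ℤ) ≤ P := by exact_mod_cast hP3
    linarith
  refine lt_of_le_of_ne (Int.le_of_dvd hpos h₂) fun heq => ?_
  have hP' : P = p₂ ∨ (P : ℤ) = k * b + 1 := by
    have : (P : ℤ) ≤ p₂ + 2 := by linarith
    obtain ⟨a, ha⟩ := hPodd
    obtain ⟨c, hc⟩ := hp₂odd
    omega
  rcases hP' with h | h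
  · have hb2 : b ∣ 2 := by
      have := dvd_sub (dvd_mul_left b k) (hsign₂ h.symm)
      rwa [h, heq, show k * b - (k * b - 1 - 1) = 2 by ring] at this
    have := Int.le_of_dvd two_pos hb2
    omega
  · rw [← h] at h₁
    have hp₁P : p₁ = P := (Nat.prime_dvd_prime_iff_eq hp₁ hP).mp (by exact_mod_cast h₁)
    exact hsign₁ hp₁P ⟨k, by rw [h]; ring⟩

theorem isBBrier_of_forall_exists_prime_dvd {ι : Type*} {S : Finset ι} {p : ι → ℕ} {ε : ι → ℤ}
    {b k : ℤ} {P : ℕ} (hb : 3 ≤ b) (hk : b - 1 ∣ k) (hp : ∀ x ∈ S, (p x).Prime ∧ p x ≠ 2)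
    (hPS : ∃ x ∈ S, p x = P) (hle : ∀ x ∈ S, p x ≤ P)
    (hsign : ∀ x ∈ S, p x = P → (ε x = -1 ↔ b ∣ (P : ℤ) - 1)) (hPk : (P : ℤ) ≤ k * b + 1)
    (hdvd : ∀ n : ℕ, 0 < n → (∃ x ∈ S, ε x = 1 ∧ (p x : ℤ) ∣ k * b ^ n + 1) ∧
      ∃ x ∈ S, ε x = -1 ∧ (p x : ℤ) ∣ k * b ^ n - 1) :
    IsBBrier b k := by
  obtain ⟨xP, hxP, rfl⟩ := hPS
  have hodd : ∀ x ∈ S, Odd (p x) := fun x hx => (hp x hx).1.odd_of_ne_two (hp x hx).2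
  have hle' : ∀ x ∈ S, (p x : ℤ) ≤ p xP := fun x hx => by exact_mod_cast hle x hx
  have hk0 : 0 < k := by
    have : (2 : ℤ) ≤ p xP := by exact_mod_cast (hp xP hxP).1.two_le
    by_contra! hk0
    nlinarith
  have hsign₁ : ∀ x ∈ S, ε x = 1 → p x = p xP → ¬ b ∣ (p xP : ℤ) - 1 := fun x hx hε h => by
    rw [← hsign x hx h, hε]
    norm_num
  obtain ⟨x₁, hx₁, hε₁, h₁⟩ := (hdvd 1 one_pos).1
  rw [pow_one] at h₁
  refine ⟨⟨hk0, gcd_add_one_eq_one_of_dvd hk, fun n hn => ?_⟩,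
    ⟨hk0, gcd_sub_one_eq_one_of_dvd hk, fun n hn => ?_⟩⟩
  · obtain ⟨x, hx, hε, hdx⟩ := (hdvd n hn).1
    refine isComposite_of_prime_dvd (hp x hx).1 hdx ?_
    obtain rfl | hn2 : n = 1 ∨ 2 ≤ n := by omega
    · simpa using lt_mul_add_one_of_le (hle x hx) hPk (hsign₁ x hx hε)
    · linarith [hle' x hx, lt_mul_pow_sub_one hb hk0 hn2]
  · obtain ⟨x, hx, hε, hdx⟩ := (hdvd n hn).2
    refine isComposite_of_prime_dvd (hp x hx).1 hdx ?_
    obtain rfl | hn2 : n = 1 ∨ 2 ≤ n := by omega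
    · rw [pow_one] at hdx ⊢
      exact prime_lt_mul_sub_one hb (hp xP hxP).1 (hp x₁ hx₁).1 (hodd xP hxP) (hodd x hx)
        (hle x hx) hPk h₁ hdx (hsign₁ x₁ hx₁ hε₁) fun h => (hsign x hx h).mp hε
    · linarith [hle' x hx, lt_mul_pow_sub_one hb hk0 hn2]

def coveringIndices (q : ℕ) : Finset (ℕ × ℕ × ℕ) :=
  ((Finset.Icc 1 q).image fun j => (j, 0, 0)) ∪ ((Finset.Iic q).image fun j => (j, 0, 1)) ∪
    (Finset.Iic q ×ˢ Finset.Icc 1 q ×ˢ Finset.Iic 1)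

def coveringModulus (q : ℕ) (x : ℕ × ℕ × ℕ) : ℕ := 2 ^ x.1 * 3 ^ x.2.1 * q ^ x.2.2

open Classical in
noncomputable def coveringSign (A : Prop) (x : ℕ × ℕ × ℕ) : ℤ := if (x.2.1 = 0 ↔ A) then 1 else -1

section Covering

variable {q : ℕ} {x : ℕ × ℕ × ℕ}

theorem mem_coveringIndices :
    x ∈ coveringIndices q ↔
      x.1 ≤ q ∧ x.2.1 ≤ q ∧ x.2.2 ≤ 1 ∧ (x.2.1 = 0 → x.2.2 = 0 → 1 ≤ x.1) := by
  obtain ⟨j, k, i⟩ := x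
  simp only [coveringIndices, Finset.mem_union, Finset.mem_image, Finset.mem_product,
    Finset.mem_Icc, Finset.mem_Iic, Prod.mk.injEq]
  constructor
  · rintro ((⟨a, ⟨h1, h2⟩, rfl, rfl, rfl⟩ | ⟨a, h1, rfl, rfl, rfl⟩) | ⟨h1, h2, h3⟩) <;> omega
  · rintro ⟨hj, hk, hi, h0⟩
    rcases Nat.eq_zero_or_pos k with rfl | hk1
    · rcases Nat.le_one_iff_eq_zero_or_eq_one.mp hi with rfl | rfl
      · exact Or.inl (Or.inl ⟨j, ⟨h0 rfl rfl, hj⟩, rfl, rfl, rfl⟩)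
      · exact Or.inl (Or.inr ⟨j, hj, rfl, rfl, rfl⟩)
    · exact Or.inr ⟨hj, ⟨hk1, hk⟩, hi⟩

theorem coveringModulus_pos (hq : 0 < q) : 0 < coveringModulus q x := by
  unfold coveringModulus
  positivity

theorem one_lt_coveringModulus (hq : 2 ≤ q) (hx : x ∈ coveringIndices q) :
    1 < coveringModulus q x := by
  obtain ⟨-, -, -, h0⟩ := mem_coveringIndices.mp hx
  have h2 : 1 ≤ 2 ^ x.1 := Nat.one_le_two_pow
  have h3 : 1 ≤ 3 ^ x.2.1 := Nat.one_le_pow _ _ (by norm_num)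
  have hq' : 1 ≤ q ^ x.2.2 := Nat.one_le_pow _ _ (by omega)
  unfold coveringModulus
  rcases Nat.eq_zero_or_pos x.2.1 with hk | hk
  · rcases Nat.eq_zero_or_pos x.2.2 with hi | hi
    · rw [hk, hi, pow_zero, pow_zero, mul_one, mul_one]
      exact Nat.one_lt_two_pow (by have := h0 hk hi; omega)
    · have := Nat.mul_le_mul (Nat.mul_le_mul h2 h3) (Nat.le_self_pow hi.ne' q)
      omega
  · have := Nat.mul_le_mul (Nat.mul_le_mul h2 (Nat.le_self_pow hk.ne' 3)) hq'
    omega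

theorem coveringModulus_dvd (hx : x ∈ coveringIndices q) :
    coveringModulus q x ∣ 2 ^ q * 3 ^ q * q := by
  obtain ⟨hj, hk, hi, -⟩ := mem_coveringIndices.mp hx
  exact mul_dvd_mul (mul_dvd_mul (pow_dvd_pow 2 hj) (pow_dvd_pow 3 hk))
    (by simpa using pow_dvd_pow q hi)

theorem coveringModulus_dvd_of_isPrimitivePrimeDiv {b : ℤ} (hx : x ∈ coveringIndices q)
    (h : IsPrimitivePrimeDiv b (coveringModulus q x) q) : coveringModulus q x ∣ 2 ^ q * 3 ^ q := by
  obtain ⟨hj, hk, hi, -⟩ := mem_coveringIndices.mp hx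
  have hi0 : x.2.2 = 0 := by
    by_contra hi0
    have hqw : q ∣ coveringModulus q x :=
      Dvd.intro_left _ (by rw [coveringModulus, show x.2.2 = 1 by omega, pow_one])
    have := h.1.two_le
    have := Nat.le_of_dvd (by omega) (hqw.trans (h.dvd_sub_one (coveringModulus_pos h.1.pos)))
    omega
  rw [coveringModulus, hi0, pow_zero, mul_one]
  exact mul_dvd_mul (pow_dvd_pow 2 hj) (pow_dvd_pow 3 hk)

theorem coveringSign_self_eq_neg_one_iff (D : Prop) :
    coveringSign (x.2.1 = 0 ↔ ¬ D) x = -1 ↔ D := by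
  unfold coveringSign
  split_ifs with h <;> norm_num <;> tauto

theorem exists_coveringSign_eq (r : ℕ → ℕ → ℕ → ℤ)
    (hcov₁ : ∀ n : ℤ,
      (∃ j, 1 ≤ j ∧ j ≤ q ∧ n ≡ r j 0 0 [ZMOD (2 : ℤ) ^ j]) ∨
      (∃ j, j ≤ q ∧ n ≡ r j 0 1 [ZMOD (2 : ℤ) ^ j * q]))
    (hcov₂ : ∀ n : ℤ, ∃ j k j', j ≤ q ∧ 1 ≤ k ∧ k ≤ q ∧ j' ≤ 1 ∧
      n ≡ r j k j' [ZMOD (2 : ℤ) ^ j * 3 ^ k * (q : ℤ) ^ j'])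
    (A : Prop) (n : ℤ) :
    (∃ x ∈ coveringIndices q, coveringSign A x = 1 ∧
      n ≡ r x.1 x.2.1 x.2.2 [ZMOD coveringModulus q x]) ∧
    ∃ x ∈ coveringIndices q, coveringSign A x = -1 ∧
      n ≡ r x.1 x.2.1 x.2.2 [ZMOD coveringModulus q x] := by
  obtain ⟨x₁, hx₁, h0, hn₁⟩ : ∃ x ∈ coveringIndices q, x.2.1 = 0 ∧
      n ≡ r x.1 x.2.1 x.2.2 [ZMOD coveringModulus q x] := by
    rcases hcov₁ n with ⟨j, hj1, hjq, h⟩ | ⟨j, hjq, h⟩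
    · exact ⟨(j, 0, 0), mem_coveringIndices.mpr ⟨hjq, Nat.zero_le _, Nat.zero_le _,
        fun _ _ => hj1⟩, rfl, by simpa [coveringModulus] using h⟩
    · exact ⟨(j, 0, 1), mem_coveringIndices.mpr ⟨hjq, Nat.zero_le _, le_rfl,
        fun _ h => absurd h one_ne_zero⟩, rfl, by simpa [coveringModulus] using h⟩
  obtain ⟨x₂, hx₂, h0', hn₂⟩ : ∃ x ∈ coveringIndices q, x.2.1 ≠ 0 ∧
      n ≡ r x.1 x.2.1 x.2.2 [ZMOD coveringModulus q x] := by
    obtain ⟨j, k, i, hj, hk1, hkq, hi, h⟩ := hcov₂ n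
    have hk0 : k ≠ 0 := Nat.pos_iff_ne_zero.mp hk1
    exact ⟨(j, k, i), mem_coveringIndices.mpr ⟨hj, hkq, hi, fun h => absurd h hk0⟩, hk0,
      by simpa [coveringModulus] using h⟩
  by_cases hA : A
  · exact ⟨⟨x₁, hx₁, by simp [coveringSign, h0, hA], hn₁⟩,
      x₂, hx₂, by simp [coveringSign, h0', hA], hn₂⟩
  · exact ⟨⟨x₂, hx₂, by simp [coveringSign, h0', hA], hn₂⟩,
      x₁, hx₁, by simp [coveringSign, h0, hA], hn₁⟩

end Covering

theorem two_pow_mul_three_pow_dvd_lcm (n m : ℕ) :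
    2 ^ n * 3 ^ n ∣ Nat.lcm (Nat.lcm (2 ^ n) m) (3 ^ n) :=
  Nat.Coprime.mul_dvd_of_dvd_of_dvd (Nat.Coprime.pow _ _ (by norm_num))
    ((Nat.dvd_lcm_left _ _).trans (Nat.dvd_lcm_left _ _)) (Nat.dvd_lcm_right _ _)

theorem exists_modEq_forall_dvd_of_eq_three_or_eq {b : ℤ} (hb : 2 ≤ b) (α : ℤ) {q : ℕ}
    (hq5 : 5 ≤ q) {p : ℕ × ℕ × ℕ → ℕ}
    (hp : ∀ x ∈ coveringIndices q, IsPrimitivePrimeDiv b (coveringModulus q x) (p x))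
    (hinj : Set.InjOn p (coveringIndices q)) (ρ : ℕ × ℕ × ℕ → ℕ) (ε : ℕ × ℕ × ℕ → ℤ) (c : ℕ) :
    ∃ T : ℕ, T ≡ c [MOD Nat.lcm (2 ^ q) (b - 1).toNat] ∧ ∀ L t : ℕ,
      Nat.lcm (2 ^ q) (b - 1).toNat ∣ L → 3 ^ q ∣ L → q ∣ L → t ≡ T [MOD L] →
        ∀ x ∈ coveringIndices q, p x = 3 ∨ p x = q →
          (p x : ℤ) ∣ (t * b ^ t + α) * b ^ ρ x + ε x := by
  set N₁ := Nat.lcm (2 ^ q) (b - 1).toNat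
  set N₂ := Nat.lcm N₁ (3 ^ q)
  have hw : ∀ x ∈ coveringIndices q, 1 < coveringModulus q x := fun x hx =>
    one_lt_coveringModulus (by omega) hx
  have hord : ∀ x ∈ coveringIndices q, orderOf (b : ZMod (p x)) = coveringModulus q x :=
    fun x hx => (hp x hx).orderOf_eq (by linarith [hw x hx])
  -- the order of `b` modulo `3` divides `2`
  obtain ⟨T₁, hT₁, h₁⟩ := exists_modEq_forall_dvd b α p ρ ε (p · = 3) c (fun x hx => (hp x hx).1)
    hinj fun x hx hx3 => ⟨(hp x hx).coprime_lcm_two_pow (hw x hx) (by omega) q, by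
      have := (hp x hx).dvd_sub_one (by linarith [hw x hx])
      rw [hx3] at this
      rw [hord x hx]
      exact this.trans ((dvd_pow_self 2 (by omega)).trans (Nat.dvd_lcm_left _ _))⟩
  obtain ⟨T₂, hT₂, h₂⟩ := exists_modEq_forall_dvd b α p ρ ε (p · = q) T₁ (fun x hx => (hp x hx).1)
    hinj fun x hx hxq => ⟨((hp x hx).coprime_lcm_two_pow (hw x hx) (by omega) q).lcm_right
      (((Nat.coprime_primes (hp x hx).1 Nat.prime_three).mpr (by omega)).pow_right q), by
      rw [hord x hx]
      exact (coveringModulus_dvd_of_isPrimitivePrimeDiv hx (hxq ▸ hp x hx)).trans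
        (two_pow_mul_three_pow_dvd_lcm q _)⟩
  refine ⟨T₂, (hT₂.of_dvd (Nat.dvd_lcm_left _ _)).trans hT₁, fun L t h₁L h₃L hqL ht x hx hx3q => ?_⟩
  have h₂L : N₂ ∣ L := Nat.lcm_dvd h₁L h₃L
  rcases hx3q with hx3 | hxq
  · refine h₁ N₂ t (Nat.dvd_lcm_left _ _) (fun y _ hy => ?_) ((ht.of_dvd h₂L).trans hT₂) x hx hx3
    rw [hy]
    exact (dvd_pow_self 3 (by omega)).trans (Nat.dvd_lcm_right _ _)
  · exact h₂ L t h₂L (fun y _ hy => hy ▸ hqL) ht x hx hxq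

theorem exists_modEq_forall_dvd_coveringIndices {b : ℤ} (hb : 2 ≤ b) (α : ℤ) {q : ℕ}
    (hq : q.Prime) (hq5 : 5 ≤ q) {p : ℕ × ℕ × ℕ → ℕ}
    (hp : ∀ x ∈ coveringIndices q, IsPrimitivePrimeDiv b (coveringModulus q x) (p x))
    (hinj : Set.InjOn p (coveringIndices q)) (ρ : ℕ × ℕ × ℕ → ℕ) (ε : ℕ × ℕ × ℕ → ℤ) :
    ∃ T : ℕ, ∀ t : ℕ, t ≡ T [MOD Nat.lcm (2 ^ q) (Nat.lcm (3 ^ q) (Nat.lcm (b - 1).toNat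
        (Nat.lcm q ((coveringIndices q).lcm p))))] →
      b - 1 ∣ t * b ^ t + α ∧
        ∀ x ∈ coveringIndices q, (p x : ℤ) ∣ (t * b ^ t + α) * b ^ ρ x + ε x := by
  set S := coveringIndices q
  set β := (b - 1).toNat
  set N₁ := Nat.lcm (2 ^ q) β
  set N₃ := Nat.lcm (Nat.lcm N₁ (3 ^ q)) q
  set M := Nat.lcm (2 ^ q) (Nat.lcm (3 ^ q) (Nat.lcm β (Nat.lcm q (S.lcm p))))
  have hdvdM : ∀ d, d ∣ Nat.lcm β (Nat.lcm q (S.lcm p)) → d ∣ M := fun d h =>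
    h.trans ((Nat.dvd_lcm_right _ _).trans (Nat.dvd_lcm_right _ _))
  have h₃M : 3 ^ q ∣ M := (Nat.dvd_lcm_left _ _).trans (Nat.dvd_lcm_right _ _)
  have hqM : q ∣ M := hdvdM q ((Nat.dvd_lcm_left _ _).trans (Nat.dvd_lcm_right _ _))
  have h₁M : N₁ ∣ M := Nat.lcm_dvd (Nat.dvd_lcm_left _ _) (hdvdM β (Nat.dvd_lcm_left _ _))
  obtain ⟨c, hc⟩ := exists_natCast_modEq (-α) (Nat.lcm_ne_zero (by positivity) (by omega) : N₁ ≠ 0)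
  obtain ⟨T₂, hT₂, h₂⟩ := exists_modEq_forall_dvd_of_eq_three_or_eq hb α hq5 hp hinj ρ ε c
  obtain ⟨T₃, hT₃, h₃⟩ := exists_modEq_forall_dvd b α p ρ ε (fun x => p x ≠ 3 ∧ p x ≠ q) T₂
    (fun x hx => (hp x hx).1) hinj fun x hx hx3q => by
      have hw := one_lt_coveringModulus (by omega) hx
      refine ⟨(((hp x hx).coprime_lcm_two_pow hw (by omega) q).lcm_right
        (((Nat.coprime_primes (hp x hx).1 Nat.prime_three).mpr hx3q.1).pow_right q)).lcm_right
        ((Nat.coprime_primes (hp x hx).1 hq).mpr hx3q.2), ?_⟩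
      rw [(hp x hx).orderOf_eq (by omega)]
      refine (coveringModulus_dvd hx).trans (Nat.Coprime.mul_dvd_of_dvd_of_dvd ?_
        ((two_pow_mul_three_pow_dvd_lcm q β).trans (Nat.dvd_lcm_left _ _)) (Nat.dvd_lcm_right _ _))
      exact Nat.Coprime.mul_left
        (((Nat.coprime_primes Nat.prime_two hq).mpr (by omega)).pow_left q)
        (((Nat.coprime_primes Nat.prime_three hq).mpr (by omega)).pow_left q)
  have h₁₃ : N₁ ∣ N₃ := (Nat.dvd_lcm_left _ _).trans (Nat.dvd_lcm_left _ _)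
  refine ⟨T₃, fun t ht => ?_⟩
  have ht₃ : t ≡ T₂ [MOD N₃] := (ht.of_dvd (Nat.lcm_dvd (Nat.lcm_dvd h₁M h₃M) hqM)).trans hT₃
  refine ⟨sub_one_dvd_mul_pow_add t ?_, fun x hx => ?_⟩
  · rw [← Int.toNat_of_nonneg (by omega : 0 ≤ b - 1)]
    refine (Int.natCast_modEq_iff.mpr ((ht₃.of_dvd h₁₃).trans hT₂) |>.trans hc).of_dvd ?_
    exact_mod_cast Nat.dvd_lcm_right _ _
  by_cases h3q : p x = 3 ∨ p x = q
  · exact h₂ N₃ t h₁₃ ((Nat.dvd_lcm_right _ _).trans (Nat.dvd_lcm_left _ _))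
      (Nat.dvd_lcm_right _ _) ht₃ x hx h3q
  · exact h₃ M t (Nat.lcm_dvd (Nat.lcm_dvd h₁M h₃M) hqM) (fun y hy _ => hdvdM _
      ((Finset.dvd_lcm hy).trans ((Nat.dvd_lcm_right _ _).trans (Nat.dvd_lcm_right _ _)))) ht x hx
      (not_or.mp h3q)

theorem brier_of_coverings_general
    (b : ℤ) (hb : 3 ≤ b)
    (α : ℤ)
    (q : ℕ) (hq : q.Prime) (hq5 : 5 ≤ q)
    (r : ℕ → ℕ → ℕ → ℤ)
    -- (i) the first covering system, with moduli 2^j (1 ≤ j ≤ q) and 2^j * q (0 ≤ j ≤ q)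
    (hcov₁ : ∀ n : ℤ,
      (∃ j, 1 ≤ j ∧ j ≤ q ∧ n ≡ r j 0 0 [ZMOD (2 : ℤ) ^ j]) ∨
      (∃ j, j ≤ q ∧ n ≡ r j 0 1 [ZMOD (2 : ℤ) ^ j * q]))
    -- (ii) the second covering system, with moduli 2^j * 3^k * q^j'
    (hcov₂ : ∀ n : ℤ, ∃ j k j', j ≤ q ∧ 1 ≤ k ∧ k ≤ q ∧ j' ≤ 1 ∧
      n ≡ r j k j' [ZMOD (2 : ℤ) ^ j * 3 ^ k * (q : ℤ) ^ j'])
    -- (iii) the primes, indexed by the exponent triples of both systems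
    (S : Finset (ℕ × ℕ × ℕ))
    (hS : S = ((Finset.Icc 1 q).image fun j => (j, 0, 0)) ∪
      ((Finset.Iic q).image fun j => (j, 0, 1)) ∪
      (Finset.Iic q ×ˢ Finset.Icc 1 q ×ˢ Finset.Iic 1))
    (p : ℕ → ℕ → ℕ → ℕ)
    (hp : ∀ x ∈ S, IsPrimitivePrimeDiv b
      (2 ^ x.1 * 3 ^ x.2.1 * q ^ x.2.2) (p x.1 x.2.1 x.2.2))
    (hdist : Set.InjOn (fun x : ℕ × ℕ × ℕ => p x.1 x.2.1 x.2.2) ↑S)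
    (Pmax M : ℕ)
    (hPmax : Pmax = S.sup (fun x => p x.1 x.2.1 x.2.2))
    (hM : M = Nat.lcm (2 ^ q) (Nat.lcm (3 ^ q) (Nat.lcm (b - 1).toNat (Nat.lcm q
      (S.lcm (fun x => p x.1 x.2.1 x.2.2)))))) :
    ∃ T : ℤ, ∀ t : ℕ, 0 < t → (t : ℤ) ≡ T [ZMOD (M : ℤ)] →
      (Pmax : ℤ) ≤ ((t : ℤ) * b ^ t + α) * b + 1 →
      IsBBrier b ((t : ℤ) * b ^ t + α) := by
  subst hS hPmax hM
  have hp' : ∀ x ∈ coveringIndices q,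
      IsPrimitivePrimeDiv b (coveringModulus q x) (p x.1 x.2.1 x.2.2) := hp
  obtain ⟨xmax, hxmax, hsup⟩ := Finset.exists_mem_eq_sup (coveringIndices q)
    ⟨(0, 0, 1), by simp [coveringIndices]⟩ fun x : ℕ × ℕ × ℕ => p x.1 x.2.1 x.2.2
  -- the covering containing the index of `P_max` gets the sign `-1` exactly when
  -- `b ∣ P_max - 1`, which rules out `k * b + 1 = P_max` and `k * b - 1 = P_max`
  set A := xmax.2.1 = 0 ↔ ¬ b ∣ (p xmax.1 xmax.2.1 xmax.2.2 : ℤ) - 1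
  choose ρ hρ using fun x : ℕ × ℕ × ℕ =>
    exists_natCast_modEq (r x.1 x.2.1 x.2.2) (coveringModulus_pos (x := x) hq.pos).ne'
  obtain ⟨T, hT⟩ := exists_modEq_forall_dvd_coveringIndices (by omega) α hq hq5 hp' hdist ρ
    (coveringSign A)
  refine ⟨T, fun t _ htT hPk => ?_⟩
  obtain ⟨hk, hdvd⟩ := hT t (Int.natCast_modEq_iff.mp htT)
  refine isBBrier_of_forall_exists_prime_dvd (ε := coveringSign A) hb hk
    (fun x hx => ⟨(hp' x hx).1, (hp' x hx).ne_two (one_lt_coveringModulus (by omega) hx)⟩)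
    ⟨xmax, hxmax, hsup.symm⟩ (fun x hx => Finset.le_sup (f := fun x => p x.1 x.2.1 x.2.2) hx)
    (fun x hx hxP => ?_) hPk fun n _ => ?_
  · obtain rfl := hdist hx hxmax (hxP.trans hsup)
    rw [hsup]
    exact coveringSign_self_eq_neg_one_iff _
  · obtain ⟨⟨x₁, hx₁, hε₁, hn₁⟩, x₂, hx₂, hε₂, hn₂⟩ := exists_coveringSign_eq r hcov₁ hcov₂ A n
    refine ⟨⟨x₁, hx₁, hε₁, ?_⟩, x₂, hx₂, hε₂, ?_⟩
    · simpa [hε₁] using (hp' x₁ hx₁).dvd_mul_pow_add_of_modEq (coveringModulus_pos hq.pos)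
        (hdvd x₁ hx₁) ((hρ x₁).trans hn₁.symm)
    · simpa [hε₂, sub_eq_add_neg] using (hp' x₂ hx₂).dvd_mul_pow_add_of_modEq
        (coveringModulus_pos hq.pos) (hdvd x₂ hx₂) ((hρ x₂).trans hn₂.symm)

theorem brier_of_coverings
    (b : ℤ) (hb : 3 ≤ b) (hb2 : ¬ ∃ n : ℕ, b + 1 = 2 ^ n)
    (α : ℤ) (hα : α ≠ 0)
    (q : ℕ) (hq : q.Prime) (hq5 : 5 ≤ q)
    (r : ℕ → ℕ → ℕ → ℤ)
    -- (i) the first covering system, with moduli 2^j (1 ≤ j ≤ q) and 2^j * q (0 ≤ j ≤ q)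
    (hcov₁ : ∀ n : ℤ,
      (∃ j, 1 ≤ j ∧ j ≤ q ∧ n ≡ r j 0 0 [ZMOD (2 : ℤ) ^ j]) ∨
      (∃ j, j ≤ q ∧ n ≡ r j 0 1 [ZMOD (2 : ℤ) ^ j * q]))
    -- (ii) the second covering system, with moduli 2^j * 3^k * q^j'
    (hcov₂ : ∀ n : ℤ, ∃ j k j', j ≤ q ∧ 1 ≤ k ∧ k ≤ q ∧ j' ≤ 1 ∧
      n ≡ r j k j' [ZMOD (2 : ℤ) ^ j * 3 ^ k * (q : ℤ) ^ j'])
    -- (iii) the primes, indexed by the exponent triples of both systems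
    (S : Finset (ℕ × ℕ × ℕ))
    (hS : S = ((Finset.Icc 1 q).image fun j => (j, 0, 0)) ∪
      ((Finset.Iic q).image fun j => (j, 0, 1)) ∪
      (Finset.Iic q ×ˢ Finset.Icc 1 q ×ˢ Finset.Iic 1))
    (p : ℕ → ℕ → ℕ → ℕ)
    (hp : ∀ x ∈ S, IsPrimitivePrimeDiv b
      (2 ^ x.1 * 3 ^ x.2.1 * q ^ x.2.2) (p x.1 x.2.1 x.2.2))
    (hdist : Set.InjOn (fun x : ℕ × ℕ × ℕ => p x.1 x.2.1 x.2.2) ↑S)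
    (Pmax M : ℕ)
    (hPmax : Pmax = S.sup (fun x => p x.1 x.2.1 x.2.2))
    (hM : M = Nat.lcm (2 ^ q) (Nat.lcm (3 ^ q) (Nat.lcm (b - 1).toNat (Nat.lcm q
      (S.lcm (fun x => p x.1 x.2.1 x.2.2)))))) :
    ∃ T : ℤ, ∀ t : ℕ, 0 < t → (t : ℤ) ≡ T [ZMOD (M : ℤ)] →
      (Pmax : ℤ) ≤ ((t : ℤ) * b ^ t + α) * b + 1 →
      IsBBrier b ((t : ℤ) * b ^ t + α) :=
  brier_of_coverings_general b hb α q hq hq5 r hcov₁ hcov₂ S hS p hp hdist Pmax M hPmax hM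
end

section
/- Let M = 3868562622766813359059760. For every positive integer t with t ≡ 2245377406103792702454767 (mod M), the Cullen number t·2^t + 1 is a Sierpiński number; that is, (t·2^t + 1)·2^n + 1 is composite for all positive integers n. -/
/-- A Sierpiński number: an odd positive integer `k` such that `k * 2 ^ n + 1` is
composite for all positive integers `n`. -/
def IsSierpinski (k : ℤ) : Prop :=
  0 < k ∧ Odd k ∧ ∀ n : ℕ, 0 < n → IsComposite (k * 2 ^ n + 1)

/-!
Write `k = t * 2 ^ t + 1`. Every exponent `n` lies in one of nine residue classes `n ≡ a (mod o)`
with `o ∣ 80`, and each class comes with a prime `p` such that `2 ^ o ≡ 1 (mod p)`. Then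
`k * 2 ^ n + 1 mod p` depends only on `t mod p`, `t mod o` and `n mod o`; the first two are fixed by
`t mod M`, since `M` is the least common multiple of `80` and the nine primes, and the residue of `t`
is chosen so that `p` divides `k * 2 ^ n + 1` for every `n` in the class. As `t` is much larger
than all nine primes, this divisor is proper.
-/

/-- The residue class `n ≡ a [MOD o]` of exponents, whose members are handled by the divisor `p`. -/
structure CoveringClass where
  p : ℕ
  o : ℕ
  a : ℕ

def cullenCovering : List CoveringClass :=
  [⟨3, 2, 0⟩, ⟨5, 4, 1⟩, ⟨11, 10, 1⟩, ⟨31, 5, 0⟩, ⟨17, 8, 3⟩, ⟨41, 20, 7⟩, ⟨257, 16, 7⟩,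
    ⟨61681, 40, 23⟩, ⟨4278255361, 80, 79⟩]

theorem exists_mem_cullenCovering_modEq (n : ℕ) :
    ∃ C ∈ cullenCovering, n ≡ C.a [MOD C.o] := by
  have hdvd : ∀ C ∈ cullenCovering, C.o ∣ 80 := by decide
  have hsmall : ∀ m < 80, ∃ C ∈ cullenCovering, m ≡ C.a [MOD C.o] := by decide
  obtain ⟨C, hC, hm⟩ := hsmall (n % 80) (Nat.mod_lt n (by norm_num))
  exact ⟨C, hC, ((Nat.mod_modEq n 80).symm.of_dvd (hdvd C hC)).trans hm⟩

theorem cullenCovering_valid : ∀ C ∈ cullenCovering,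
    1 < C.p ∧ C.p ≤ 2245377406103792702454767 ∧
      C.p ∣ 3868562622766813359059760 ∧ C.o ∣ 3868562622766813359059760 ∧
      2 ^ C.o ≡ 1 [MOD C.p] ∧
      C.p ∣ (2245377406103792702454767 % C.p * 2 ^ (2245377406103792702454767 % C.o) + 1) *
        2 ^ C.a + 1 := by
  decide

theorem Nat.pow_modEq_pow_of_modEq {x o p a b : ℕ} (hx : x ^ o ≡ 1 [MOD p])
    (h : a ≡ b [MOD o]) : x ^ a ≡ x ^ b [MOD p] := by
  rw [← ZMod.natCast_eq_natCast_iff] at hx ⊢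
  push_cast at hx ⊢
  rw [pow_eq_pow_mod a hx, pow_eq_pow_mod b hx, h]

theorem dvd_cullen_mul_two_pow_add_one {p o t c e n a : ℕ} (h2 : 2 ^ o ≡ 1 [MOD p])
    (htp : t ≡ c [MOD p]) (hto : t ≡ e [MOD o]) (hn : n ≡ a [MOD o])
    (hp : p ∣ (c * 2 ^ e + 1) * 2 ^ a + 1) : p ∣ (t * 2 ^ t + 1) * 2 ^ n + 1 := by
  have h : (t * 2 ^ t + 1) * 2 ^ n + 1 ≡ (c * 2 ^ e + 1) * 2 ^ a + 1 [MOD p] := by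
    gcongr
    · exact Nat.pow_modEq_pow_of_modEq h2 hto
    · exact Nat.pow_modEq_pow_of_modEq h2 hn
  exact Nat.modEq_zero_iff_dvd.mp (h.trans (Nat.modEq_zero_iff_dvd.mpr hp))

theorem exists_dvd_cullen_mul_two_pow_add_one {t : ℕ}
    (ht : t ≡ 2245377406103792702454767 [MOD 3868562622766813359059760]) (n : ℕ) :
    ∃ p, 1 < p ∧ p ≤ 2245377406103792702454767 ∧ p ∣ (t * 2 ^ t + 1) * 2 ^ n + 1 := by
  obtain ⟨C, hC, hn⟩ := exists_mem_cullenCovering_modEq n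
  obtain ⟨hp, hpr, hpM, hoM, h2, hdvd⟩ := cullenCovering_valid C hC
  have htp := (ht.of_dvd hpM).trans (Nat.mod_modEq _ _).symm
  have hto := (ht.of_dvd hoM).trans (Nat.mod_modEq _ _).symm
  exact ⟨C.p, hp, hpr, dvd_cullen_mul_two_pow_add_one h2 htp hto hn hdvd⟩

theorem isComposite_of_dvd {p m : ℤ} (hp : 1 < p) (hpm : p < m) (hd : p ∣ m) :
    IsComposite m := by
  refine ⟨hp.trans hpm, fun hm => ?_⟩
  rcases (Int.prime_iff_natAbs_prime.mp hm).eq_one_or_self_of_dvd _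
    (Int.natAbs_dvd_natAbs.mpr hd) with h | h <;> omega

theorem cullen_sierpinski :
    ∀ t : ℕ, 0 < t →
      (t : ℤ) ≡ 2245377406103792702454767 [ZMOD 3868562622766813359059760] →
      IsSierpinski ((t : ℤ) * 2 ^ t + 1) := by
  intro t ht h
  have htM : t ≡ 2245377406103792702454767 [MOD 3868562622766813359059760] :=
    Int.natCast_modEq_iff.mp h
  have hrt : 2245377406103792702454767 ≤ t := by unfold Nat.ModEq at htM; omega
  refine ⟨by positivity, ((Int.even_pow.mpr ⟨even_two, ht.ne'⟩).mul_left _).add_one,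
    fun n _ => ?_⟩
  obtain ⟨p, hp, hpr, hdvd⟩ := exists_dvd_cullen_mul_two_pow_add_one htM n
  have htm : t < (t * 2 ^ t + 1) * 2 ^ n + 1 :=
    calc t ≤ t * 2 ^ t := Nat.le_mul_of_pos_right t (Nat.two_pow_pos t)
      _ < (t * 2 ^ t + 1) * 2 ^ n + 1 := by
        have := Nat.le_mul_of_pos_right (t * 2 ^ t + 1) (Nat.two_pow_pos n)
        omega
  exact_mod_cast isComposite_of_dvd (p := p) (by omega) (by omega)
    (Int.natCast_dvd_natCast.mpr hdvd)
end

section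
/- Let M = 3868562622766813359059760. For every positive integer t with t ≡ 1951609044082776021493089 (mod M), the Woodall number t·2^t − 1 is a Sierpiński number; that is, (t·2^t − 1)·2^n + 1 is composite for all positive integers n. -/
theorem isComposite_of_dvd_s5 {d m : ℤ} (hd : 1 < d) (hdm : d < m) (hdvd : d ∣ m) :
    IsComposite m := by
  refine ⟨hd.trans hdm, fun hm => ?_⟩
  obtain ⟨e, rfl⟩ := hdvd
  rcases hm.irreducible.isUnit_or_isUnit rfl with hu | hu
  · rcases Int.isUnit_iff.mp hu with rfl | rfl <;> omega
  · rcases Int.isUnit_iff.mp hu with rfl | rfl <;> omega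

theorem Int.ModEq.gcd_eq {a b n : ℤ} (h : a ≡ b [ZMOD n]) : a.gcd n = b.gcd n := by
  rw [← Int.gcd_emod, h, Int.gcd_emod]

theorem Int.ModEq.pow_eq_pow_mod {a n : ℤ} {m : ℕ} (h : a ^ m ≡ 1 [ZMOD n]) (k : ℕ) :
    a ^ k ≡ a ^ (k % m) [ZMOD n] := by
  calc a ^ k = a ^ (k % m) * (a ^ m) ^ (k / m) := by rw [← pow_mul, ← pow_add, Nat.mod_add_div]
    _ ≡ a ^ (k % m) * 1 ^ (k / m) [ZMOD n] := (h.pow _).mul_left _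
    _ = a ^ (k % m) := by rw [one_pow, mul_one]

theorem isComposite_mul_two_pow_add_one_of_covering {k k₀ N : ℤ} {m : ℕ} (hm : 0 < m)
    (hN : 0 < N) (hNk : N < k) (hk : k ≡ k₀ [ZMOD N]) (h2m : 2 ^ m ≡ 1 [ZMOD N])
    (hcover : ∀ c < m, (k₀ * 2 ^ c + 1).gcd N ≠ 1) (n : ℕ) :
    IsComposite (k * 2 ^ n + 1) := by
  set d : ℤ := ((k * 2 ^ n + 1).gcd N : ℤ)
  have hd_eq : d = (k₀ * 2 ^ (n % m) + 1).gcd N :=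
    congrArg _ ((hk.mul (h2m.pow_eq_pow_mod n)).add_right 1).gcd_eq
  have hd_pos : 0 < d := Int.natCast_pos.mpr (Int.gcd_pos_of_ne_zero_right _ hN.ne')
  have hd_le : d ≤ N := Int.le_of_dvd hN (Int.gcd_dvd_right _ _)
  have hk_le : k ≤ k * 2 ^ n := le_mul_of_one_le_right (by linarith) (one_le_pow₀ one_le_two)
  refine isComposite_of_dvd_s5 (d := d) ?_ (by linarith) (Int.gcd_dvd_left _ _)
  have := hcover (n % m) (Nat.mod_lt n hm)
  omega

theorem woodall_covering : ∀ c < 80,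
    ((1951609044082776021493089 * 2 ^ 49 - 1) * 2 ^ c + 1 : ℤ).gcd ((2 ^ 80 - 1) / 5) ≠ 1 := by
  decide +kernel

theorem woodall_sierpinski :
    ∀ t : ℕ, 0 < t →
      (t : ℤ) ≡ 1951609044082776021493089 [ZMOD 3868562622766813359059760] →
      IsSierpinski ((t : ℤ) * 2 ^ t - 1) := by
  intro t ht_pos ht
  have ht_80 : t % 80 = 49 := by
    have := ht.of_dvd (show (80 : ℤ) ∣ 3868562622766813359059760 by norm_num)
    unfold Int.ModEq at this
    omega
  have h2_80 : (2 : ℤ) ^ 80 ≡ 1 [ZMOD (2 ^ 80 - 1) / 5] := by decide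
  have hk : (t : ℤ) * 2 ^ t - 1 ≡
      1951609044082776021493089 * 2 ^ 49 - 1 [ZMOD (2 ^ 80 - 1) / 5] := by
    have h2_t := h2_80.pow_eq_pow_mod t
    rw [ht_80] at h2_t
    exact ((ht.of_dvd (by norm_num)).mul h2_t).sub_right 1
  have hk_big : (2 ^ 80 - 1) / 5 < (t : ℤ) * 2 ^ t - 1 := by
    have ht_ge : 1951609044082776021493089 ≤ (t : ℤ) := by
      unfold Int.ModEq at ht
      omega
    have ht_le : (t : ℤ) ≤ t * 2 ^ t := le_mul_of_one_le_right (by positivity) (one_le_pow₀ one_le_two)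
    norm_num
    linarith
  refine ⟨(show (0 : ℤ) < (2 ^ 80 - 1) / 5 by norm_num).trans hk_big, ?_, fun n _ => ?_⟩
  · exact ((Int.even_pow.mpr ⟨even_two, ht_pos.ne'⟩).mul_left _).sub_odd odd_one
  · exact isComposite_mul_two_pow_add_one_of_covering (by norm_num) (by norm_num) hk_big hk h2_80
      woodall_covering n
end

section
/- For any integer b ≥ 2 and any integers α and β with α·β ≠ 0, there exist infinitely many positive integers t such that gcd((t·b^t + α) + β, b − 1) = 1 and (t·b^t + α)·b^n + β is composite for all positive integers n. -/
namespace SierpinskiRiesel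

open Function

lemma isComposite_of_dvd {m N : ℤ} (hm : 1 < m) (hmN : m < N) (hdvd : m ∣ N) : IsComposite N := by
  refine ⟨hm.trans hmN, fun hN => ?_⟩
  have := (Int.prime_iff_natAbs_prime.1 hN).eq_one_or_self_of_dvd _ (Int.natAbs_dvd_natAbs.2 hdvd)
  omega

lemma gcd_eq_one_of_modEq_one {x n : ℤ} (h : x ≡ 1 [ZMOD n]) : Int.gcd x n = 1 := by
  obtain ⟨k, hk⟩ := h.symm.dvd
  rw [← Int.isCoprime_iff_gcd_eq_one]
  exact ⟨1, -k, by linear_combination hk⟩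

lemma natCast_ne_zero_of_lt {p k : ℕ} (hk : 0 < k) (hkp : k < p) : (k : ZMod p) ≠ 0 := by
  rw [Ne, ZMod.natCast_eq_zero_iff]
  exact Nat.not_dvd_of_pos_of_lt hk hkp

lemma exists_le_forall_modEq {l : List (ℕ × ℕ)} (hl : l.Pairwise (Nat.Coprime on Prod.fst))
    (h0 : ∀ q ∈ l, q.1 ≠ 0) (K : ℕ) : ∃ t, K ≤ t ∧ ∀ q ∈ l, t ≡ q.2 [MOD q.1] := by
  obtain ⟨r, hr⟩ := Nat.chineseRemainderOfList Prod.snd Prod.fst l hl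
  have hL : (l.map Prod.fst).prod ≠ 0 := by
    simpa [List.prod_eq_zero_iff] using fun x hx => h0 (0, x) hx rfl
  obtain ⟨t, hKt, ht⟩ := (Nat.frequently_modEq hL r).forall_exists_of_atTop K
  exact ⟨t, hKt, fun q hq => (ht.of_dvd (List.dvd_prod (List.mem_map_of_mem hq))).trans (hr q hq)⟩

lemma forall_exists_modEq_of_lt {ι : Type*} {l : List ι} {d a : ι → ℕ} {L : ℕ} (hL : L ≠ 0)
    (hd : ∀ i ∈ l, d i ∣ L) (h : ∀ n < L, ∃ i ∈ l, n ≡ a i [MOD d i]) (n : ℕ) :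
    ∃ i ∈ l, n ≡ a i [MOD d i] := by
  obtain ⟨i, hi, hn⟩ := h (n % L) (Nat.mod_lt _ (Nat.pos_of_ne_zero hL))
  exact ⟨i, hi, ((Nat.mod_modEq n L).of_dvd (hd i hi)).symm.trans hn⟩

def sierpinskiRieselSet (b α β : ℤ) : Set ℕ :=
  {t : ℕ | 0 < t ∧ Int.gcd ((t : ℤ) * b ^ t + α + β) (b - 1) = 1 ∧
    ∀ n : ℕ, 0 < n → IsComposite (((t : ℤ) * b ^ t + α) * b ^ n + β)}

structure CoveringClass where
  modulus : ℕ
  residue : ℕ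
  prime : ℕ

variable {b α β : ℤ}

lemma gcd_sub_one_eq_one_of_modEq {t : ℕ} (ht : (t : ℤ) ≡ 1 - α - β [ZMOD b - 1]) :
    Int.gcd ((t : ℤ) * b ^ t + α + β) (b - 1) = 1 := by
  apply gcd_eq_one_of_modEq_one
  have hb : b ≡ 1 [ZMOD b - 1] := Int.modEq_iff_dvd.2 ⟨-1, by ring⟩
  calc (t : ℤ) * b ^ t + α + β ≡ (1 - α - β) * 1 ^ t + α + β [ZMOD b - 1] := by gcongr
    _ = 1 := by ring

lemma isComposite_of_dvd_of_lt (hb : 1 ≤ b) {t m : ℕ} (n : ℕ) (hm : 1 < m)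
    (ht : m + α.natAbs + β.natAbs < t) (hdvd : (m : ℤ) ∣ ((t : ℤ) * b ^ t + α) * b ^ n + β) :
    IsComposite (((t : ℤ) * b ^ t + α) * b ^ n + β) := by
  refine isComposite_of_dvd (by exact_mod_cast hm) ?_ hdvd
  have hA : (m : ℤ) + β.natAbs < (t : ℤ) * b ^ t + α := by
    have : (t : ℤ) ≤ t * b ^ t := le_mul_of_one_le_right (by positivity) (one_le_pow₀ hb)
    omega
  have hAn : (t : ℤ) * b ^ t + α ≤ ((t : ℤ) * b ^ t + α) * b ^ n :=
    le_mul_of_one_le_right (by omega) (one_le_pow₀ hb)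
  omega

lemma dvd_of_pow_eq_one {p d t τ n a : ℕ} (hb : (b : ZMod p) ^ d = 1) (ht : t ≡ τ [MOD d])
    (hn : n ≡ a [MOD d]) (h : ((t : ZMod p) * b ^ τ + α) * b ^ a + β = 0) :
    (p : ℤ) ∣ ((t : ℤ) * b ^ t + α) * b ^ n + β := by
  rw [← ZMod.intCast_zmod_eq_zero_iff_dvd]
  push_cast
  rwa [pow_eq_pow_of_modEq ht hb, pow_eq_pow_of_modEq hn hb]

lemma exists_natCast_root {p : ℕ} [Fact p.Prime] {x : ZMod p} (hx : x ≠ 0) (τ a : ℕ)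
    (α β : ZMod p) : ∃ s : ℕ, ((s : ZMod p) * x ^ τ + α) * x ^ a + β = 0 :=
  ⟨(-(α * x ^ a + β) / (x ^ τ * x ^ a)).val, by rw [ZMod.natCast_zmod_val]; field_simp; ring⟩

section Covering

variable {M W : ℕ} {C₀ C : List CoveringClass}
  (hcov : ∀ n, ∃ c ∈ C₀ ++ C, n ≡ c.residue [MOD c.modulus])
  (hclass : ∀ c ∈ C₀ ++ C, c.modulus ∣ M ∧ c.prime.Prime ∧ (b : ZMod c.prime) ^ c.modulus = 1)
  (hC₀ : ∀ c ∈ C₀, c.prime ∣ M ∧ ((W : ZMod c.prime) * b ^ W + α) * b ^ c.residue + β = 0)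
include hcov hclass hC₀

lemma exists_prime_dvd_of_modEq {t : ℕ} (htM : t ≡ W [MOD M])
    (htC : ∀ c ∈ C, ((t : ZMod c.prime) * b ^ W + α) * b ^ c.residue + β = 0) (n : ℕ) :
    ∃ c ∈ C₀ ++ C, (c.prime : ℤ) ∣ ((t : ℤ) * b ^ t + α) * b ^ n + β := by
  obtain ⟨c, hc, hn⟩ := hcov n
  obtain ⟨hdM, -, hpow⟩ := hclass c hc
  refine ⟨c, hc, dvd_of_pow_eq_one hpow (htM.of_dvd hdM) hn ?_⟩
  rcases List.mem_append.1 hc with hc | hc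
  · obtain ⟨hpM, h⟩ := hC₀ c hc
    rwa [(ZMod.natCast_eq_natCast_iff _ _ _).2 (htM.of_dvd hpM)]
  · exact htC c hc

/-- The classes of `C₀` have their prime dividing `M`, so they are settled by the choice of `W`;
those of `C` are settled by the Chinese remainder theorem. -/
theorem sierpinskiRieselSet_infinite_of_covering (hb : 1 ≤ b) (hM : M ≠ 0) (hbM : b - 1 ∣ M)
    (hW : (W : ℤ) ≡ 1 - α - β [ZMOD b - 1])
    (hC : (M :: C.map CoveringClass.prime).Pairwise Nat.Coprime) :
    (sierpinskiRieselSet b α β).Infinite := by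
  have hroot : ∀ c ∈ C, ∃ s : ℕ, ((s : ZMod c.prime) * b ^ W + α) * b ^ c.residue + β = 0 := by
    intro c hc
    obtain ⟨hdM, hp, hpow⟩ := hclass c (List.mem_append_right _ hc)
    have := Fact.mk hp
    refine exists_natCast_root (fun hb0 => ?_) _ _ _ _
    rw [hb0, zero_pow (ne_zero_of_dvd_ne_zero hM hdM)] at hpow
    exact zero_ne_one hpow
  choose! s hs using hroot
  have hP : ((M, W) :: C.map fun c => (c.prime, s c)).Pairwise (Nat.Coprime on Prod.fst) := by
    simpa [List.pairwise_map] using hC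
  have hP0 : ∀ q ∈ (M, W) :: C.map (fun c => (c.prime, s c)), q.1 ≠ 0 := by
    simp only [List.mem_cons, List.mem_map]
    rintro q (rfl | ⟨c, hc, rfl⟩)
    exacts [hM, (hclass c (List.mem_append_right _ hc)).2.1.ne_zero]
  refine Set.infinite_of_forall_exists_gt fun K => ?_
  obtain ⟨t, hKt, ht⟩ := exists_le_forall_modEq hP hP0
    (K + ((C₀ ++ C).map CoveringClass.prime).sum + α.natAbs + β.natAbs + 1)
  have htM : t ≡ W [MOD M] := ht _ List.mem_cons_self
  have htC : ∀ c ∈ C, ((t : ZMod c.prime) * b ^ W + α) * b ^ c.residue + β = 0 := fun c hc => by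
    rw [(ZMod.natCast_eq_natCast_iff _ _ _).2
      (ht _ (List.mem_cons_of_mem _ (List.mem_map_of_mem hc)))]
    exact hs c hc
  refine ⟨t, ⟨by omega, gcd_sub_one_eq_one_of_modEq ?_, fun n _ => ?_⟩, by omega⟩
  · exact (Int.natCast_modEq_iff.2 htM).of_dvd hbM |>.trans hW
  · obtain ⟨c, hc, hdvd⟩ := exists_prime_dvd_of_modEq hcov hclass hC₀ htM htC n
    have := List.le_sum_of_mem (List.mem_map_of_mem (f := CoveringClass.prime) hc)
    exact isComposite_of_dvd_of_lt hb n (hclass c hc).2.1.one_lt (by omega) hdvd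

end Covering

lemma exists_prime_five_le_dvd {n : ℕ} (h6 : ¬ n ∣ 6) (h4 : (n : ZMod 4) ≠ 0)
    (h9 : (n : ZMod 9) ≠ 0) : ∃ p, p.Prime ∧ 5 ≤ p ∧ p ∣ n := by
  rw [Ne, ZMod.natCast_eq_zero_iff] at h4 h9
  by_contra! h
  have h23 : ∀ p, p.Prime → p ∣ n → p = 2 ∨ p = 3 := by
    intro p hp hpn
    have := hp.two_le
    have : p < 5 := not_le.1 fun h5 => h p hp h5 hpn
    interval_cases p <;> omega
  have hsq : Squarefree n := by
    refine Nat.squarefree_iff_prime_squarefree.2 fun p hp hpp => ?_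
    rcases h23 p hp ((Dvd.intro _ rfl).trans hpp) with rfl | rfl
    exacts [h4 hpp, h9 hpp]
  refine h6 ?_
  rw [← Nat.prod_primeFactors_of_squarefree hsq]
  refine (Finset.prod_dvd_prod_of_subset _ {2, 3} _ fun p hp => ?_).trans (dvd_refl 6)
  have := h23 p (Nat.prime_of_mem_primeFactors hp) (Nat.dvd_of_mem_primeFactors hp)
  simpa using this

lemma exists_prime_five_le_dvd_sq_add_one {c : ℕ} (hc : 2 ≤ c) :
    ∃ p, p.Prime ∧ 5 ≤ p ∧ p ∣ c ^ 2 + 1 := by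
  refine exists_prime_five_le_dvd (fun h => ?_) ?_ ?_
  · have : c ≤ 2 := by nlinarith [Nat.le_of_dvd (by norm_num) h]
    interval_cases c
    norm_num at h
  · exact_mod_cast (by decide : ∀ y : ZMod 4, y ^ 2 + 1 ≠ 0) c
  · exact_mod_cast (by decide : ∀ y : ZMod 9, y ^ 2 + 1 ≠ 0) c

lemma exists_prime_five_le_dvd_sq_add_add_one {c : ℕ} (hc : 2 ≤ c) :
    ∃ p, p.Prime ∧ 5 ≤ p ∧ p ∣ c ^ 2 + c + 1 := by
  refine exists_prime_five_le_dvd (fun h => ?_) ?_ ?_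
  · nlinarith [Nat.le_of_dvd (by norm_num) h]
  · exact_mod_cast (by decide : ∀ y : ZMod 4, y ^ 2 + y + 1 ≠ 0) c
  · exact_mod_cast (by decide : ∀ y : ZMod 9, y ^ 2 + y + 1 ≠ 0) c

lemma exists_prime_five_le_dvd_sq_sub_add_one {c : ℕ} (hc : 3 ≤ c) :
    ∃ p, p.Prime ∧ 5 ≤ p ∧ p ∣ c ^ 2 - c + 1 := by
  have hcc : c ≤ c ^ 2 := Nat.le_self_pow two_ne_zero c
  refine exists_prime_five_le_dvd (fun h => ?_) ?_ ?_
  · have := Nat.le_of_dvd (by norm_num) h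
    have : c * 3 ≤ c ^ 2 := by nlinarith
    omega
  · push_cast [hcc]
    exact (by decide : ∀ y : ZMod 4, y ^ 2 - y + 1 ≠ 0) c
  · push_cast [hcc]
    exact (by decide : ∀ y : ZMod 9, y ^ 2 - y + 1 ≠ 0) c

section OrderOf

variable {R : Type*} [CommRing R] {x : R}

lemma orderOf_eq_two_pow (h2 : (2 : R) ≠ 0) {i : ℕ} (hx : (x ^ 2 ^ i) ^ 2 + 1 = 0) :
    orderOf x = 2 ^ (i + 2) := by
  have hy : x ^ 2 ^ (i + 1) = -1 := by rw [pow_succ, pow_mul]; linear_combination hx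
  refine orderOf_eq_prime_pow (fun h => h2 ?_) ?_
  · linear_combination hy - h
  · rw [pow_succ, pow_mul, hy]
    norm_num

lemma orderOf_eq_three_pow (h3 : (3 : R) ≠ 0) {j : ℕ}
    (hx : (x ^ 3 ^ j) ^ 2 + x ^ 3 ^ j + 1 = 0) : orderOf x = 3 ^ (j + 1) := by
  refine orderOf_eq_prime_pow (fun h => h3 ?_) ?_
  · rw [h] at hx
    linear_combination hx
  · rw [pow_succ, pow_mul]
    linear_combination (x ^ 3 ^ j - 1) * hx

lemma orderOf_eq_two_pow_mul_three_pow (h2 : (2 : R) ≠ 0) (h3 : (3 : R) ≠ 0) {i j : ℕ}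
    (hx : (x ^ (2 ^ i * 3 ^ j)) ^ 2 - x ^ (2 ^ i * 3 ^ j) + 1 = 0) :
    orderOf x = 2 ^ (i + 1) * 3 ^ (j + 1) := by
  set k := 2 ^ i * 3 ^ j
  have hd : 2 ^ (i + 1) * 3 ^ (j + 1) = 6 * k := by ring
  have hcube : x ^ (3 * k) = -1 := by
    rw [mul_comm, pow_mul]
    linear_combination (x ^ k + 1) * hx
  have hsq : x ^ (2 * k) ≠ 1 := fun h => h3 <| by
    rw [mul_comm, pow_mul] at h
    linear_combination h - (x ^ k + 2) * (h - hx)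
  refine orderOf_eq_of_pow_and_pow_div_prime (by positivity) ?_ fun q hq hqd => ?_
  · rw [hd, show 6 * k = 2 * (3 * k) by ring, pow_mul', hcube]
    norm_num
  · have h23 : q = 2 ∨ q = 3 := by
      rcases hq.dvd_mul.1 hqd with h | h
      exacts [Or.inl ((Nat.prime_dvd_prime_iff_eq hq Nat.prime_two).1 (hq.dvd_of_dvd_pow h)),
        Or.inr ((Nat.prime_dvd_prime_iff_eq hq Nat.prime_three).1 (hq.dvd_of_dvd_pow h))]
    rcases h23 with rfl | rfl
    · rw [hd, show 6 * k / 2 = 3 * k by omega, hcube]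
      exact fun h => h2 (by linear_combination -h)
    · rwa [hd, show 6 * k / 3 = 2 * k by omega]

end OrderOf

section PrimitivePrimes

variable {b : ℕ}

lemma two_ne_zero_of_five_le {p : ℕ} (hp : 5 ≤ p) : (2 : ZMod p) ≠ 0 := by
  exact_mod_cast natCast_ne_zero_of_lt (k := 2) two_pos (by omega)

lemma three_ne_zero_of_five_le {p : ℕ} (hp : 5 ≤ p) : (3 : ZMod p) ≠ 0 := by
  exact_mod_cast natCast_ne_zero_of_lt (k := 3) three_pos (by omega)

lemma exists_prime_orderOf_eq_two_pow (hb : 2 ≤ b) (i : ℕ) :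
    ∃ p, p.Prime ∧ 5 ≤ p ∧ orderOf (b : ZMod p) = 2 ^ (i + 2) := by
  obtain ⟨p, hp, hp5, hpc⟩ :=
    exists_prime_five_le_dvd_sq_add_one (c := b ^ 2 ^ i)
      (hb.trans (Nat.le_self_pow (by positivity) b))
  refine ⟨p, hp, hp5, orderOf_eq_two_pow (two_ne_zero_of_five_le hp5) ?_⟩
  exact_mod_cast (ZMod.natCast_eq_zero_iff _ _).2 hpc

lemma exists_prime_orderOf_eq_three_pow (hb : 2 ≤ b) (j : ℕ) :
    ∃ p, p.Prime ∧ 5 ≤ p ∧ orderOf (b : ZMod p) = 3 ^ (j + 1) := by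
  obtain ⟨p, hp, hp5, hpc⟩ :=
    exists_prime_five_le_dvd_sq_add_add_one (c := b ^ 3 ^ j)
      (hb.trans (Nat.le_self_pow (by positivity) b))
  refine ⟨p, hp, hp5, orderOf_eq_three_pow (three_ne_zero_of_five_le hp5) ?_⟩
  exact_mod_cast (ZMod.natCast_eq_zero_iff _ _).2 hpc

lemma exists_prime_orderOf_eq_two_pow_mul_three_pow (hb : 3 ≤ b) (i j : ℕ) :
    ∃ p, p.Prime ∧ 5 ≤ p ∧ orderOf (b : ZMod p) = 2 ^ (i + 1) * 3 ^ (j + 1) := by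
  have hc : b ^ (2 ^ i * 3 ^ j) ≤ (b ^ (2 ^ i * 3 ^ j)) ^ 2 := Nat.le_self_pow two_ne_zero _
  obtain ⟨p, hp, hp5, hpc⟩ := exists_prime_five_le_dvd_sq_sub_add_one
    (c := b ^ (2 ^ i * 3 ^ j)) (hb.trans (Nat.le_self_pow (by positivity) b))
  refine ⟨p, hp, hp5, orderOf_eq_two_pow_mul_three_pow (two_ne_zero_of_five_le hp5)
    (three_ne_zero_of_five_le hp5) ?_⟩
  have := (ZMod.natCast_eq_zero_iff _ _).2 hpc
  push_cast [hc] at this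
  exact this

lemma exists_prime_orderOf_eq (hb : 3 ≤ b) {d : ℕ}
    (hd : d ∈ [3, 4, 6, 8, 9, 12, 16, 18, 24, 36, 48]) :
    ∃ p, p.Prime ∧ 5 ≤ p ∧ orderOf (b : ZMod p) = d := by
  simp only [List.mem_cons, List.not_mem_nil, or_false] at hd
  rcases hd with rfl | rfl | rfl | rfl | rfl | rfl | rfl | rfl | rfl | rfl | rfl
  · exact exists_prime_orderOf_eq_three_pow (by omega) 0
  · exact exists_prime_orderOf_eq_two_pow (by omega) 0
  · exact exists_prime_orderOf_eq_two_pow_mul_three_pow hb 0 0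
  · exact exists_prime_orderOf_eq_two_pow (by omega) 1
  · exact exists_prime_orderOf_eq_three_pow (by omega) 1
  · exact exists_prime_orderOf_eq_two_pow_mul_three_pow hb 1 0
  · exact exists_prime_orderOf_eq_two_pow (by omega) 2
  · exact exists_prime_orderOf_eq_two_pow_mul_three_pow hb 0 1
  · exact exists_prime_orderOf_eq_two_pow_mul_three_pow hb 2 0
  · exact exists_prime_orderOf_eq_two_pow_mul_three_pow hb 1 1
  · exact exists_prime_orderOf_eq_two_pow_mul_three_pow hb 3 0

lemma coprime_of_orderOf_ne_one (hb : 1 ≤ b) {p : ℕ} (hp : p.Prime) (hp5 : 5 ≤ p)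
    (hord : orderOf (b : ZMod p) ≠ 1) : Nat.Coprime (144 * (b - 1)) p := by
  refine Nat.Coprime.mul_left ?_ ((hp.coprime_iff_not_dvd.2 fun h => hord ?_).symm)
  · have h2 := (Nat.coprime_primes Nat.prime_two hp).2 (by omega)
    have h3 := (Nat.coprime_primes Nat.prime_three hp).2 (by omega)
    simpa using Nat.Coprime.mul_left (h2.pow_left 4) (h3.pow_left 2)
  · have := (ZMod.natCast_eq_zero_iff _ _).2 h
    push_cast [hb] at this
    rw [orderOf_eq_one_iff]
    linear_combination this

lemma pairwise_coprime_of_orderOf_eq {P : ℕ → ℕ} {D : List ℕ} (hD : D.Nodup)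
    (hP : ∀ d ∈ D, (P d).Prime ∧ orderOf (b : ZMod (P d)) = d) :
    (D.map P).Pairwise Nat.Coprime := by
  refine List.pairwise_map.2 (List.Pairwise.imp_of_mem (fun hd hd' hne => ?_) hD)
  refine (Nat.coprime_primes (hP _ hd).1 (hP _ hd').1).2 fun h => hne ?_
  rw [← (hP _ hd).2, ← (hP _ hd').2, h]

end PrimitivePrimes

theorem sierpinskiRieselSet_two_infinite (α β : ℤ) : (sierpinskiRieselSet 2 α β).Infinite := by
  obtain ⟨W, -, hW⟩ : ∃ W ∈ ([0, 1, 4] : List ℕ), (W : ZMod 3) * 2 ^ W = -(α + β) := by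
    generalize (-(α + β) : ZMod 3) = x
    revert x
    decide
  refine sierpinskiRieselSet_infinite_of_covering (M := 36) (W := W) (C₀ := [⟨2, 0, 3⟩])
    (C := [⟨3, 0, 7⟩, ⟨4, 1, 5⟩, ⟨9, 1, 73⟩, ⟨12, 11, 13⟩, ⟨18, 7, 19⟩, ⟨36, 31, 37⟩])
    (forall_exists_modEq_of_lt (L := 36) (by norm_num) (by decide) (by decide)) (by decide) ?_
    (by norm_num) (by norm_num) (by norm_num) Int.modEq_one (by decide)
  simp only [List.mem_singleton, forall_eq]
  refine ⟨by norm_num, ?_⟩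
  push_cast
  linear_combination hW

theorem sierpinskiRieselSet_infinite_of_three_le {b : ℕ} (hb : 3 ≤ b) (α β : ℤ) :
    (sierpinskiRieselSet b α β).Infinite := by
  let S : List (ℕ × ℕ) := [(3, 0), (4, 0), (6, 1), (8, 2), (9, 2), (12, 5), (16, 6), (18, 5),
    (24, 22), (36, 35), (48, 14)]
  have hS : S.map Prod.fst = [3, 4, 6, 8, 9, 12, 16, 18, 24, 36, 48] := rfl
  choose! P hP using fun d (hd : d ∈ S.map Prod.fst) => exists_prime_orderOf_eq hb (hS ▸ hd)
  have hM : 144 * (b - 1) ≠ 0 := by omega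
  have hbM : (b : ℤ) - 1 ∣ (144 * (b - 1) : ℕ) := ⟨144, by push_cast [show 1 ≤ b by omega]; ring⟩
  refine sierpinskiRieselSet_infinite_of_covering (C₀ := []) (C := S.map fun c => ⟨c.1, c.2, P c.1⟩)
    (W := ((1 - α - β) % (144 * (b - 1) : ℕ)).toNat) (fun n => ?_) ?_ (by simp) (by omega) hM hbM
    ?_ ?_
  · obtain ⟨c, hc, hn⟩ := forall_exists_modEq_of_lt (l := S) (d := Prod.fst) (a := Prod.snd)
      (L := 144) (by norm_num) (by decide) (by decide) n
    exact ⟨_, List.mem_map_of_mem hc, hn⟩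
  · simp only [List.nil_append, List.mem_map]
    rintro _ ⟨c, hc, rfl⟩
    obtain ⟨hp, -, hord⟩ := hP c.1 (List.mem_map_of_mem hc)
    refine ⟨Dvd.dvd.mul_right ((by decide : ∀ c ∈ S, c.1 ∣ 144) c hc) _, hp, ?_⟩
    simpa [hord] using pow_orderOf_eq_one (b : ZMod (P c.1))
  · rw [Int.toNat_of_nonneg (Int.emod_nonneg _ (by exact_mod_cast hM))]
    exact (Int.mod_modEq _ _).of_dvd hbM
  · have hmap : (S.map fun c => (⟨c.1, c.2, P c.1⟩ : CoveringClass)).map CoveringClass.prime =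
        (S.map Prod.fst).map P := by simp [List.map_map, Function.comp_def]
    rw [hmap, List.pairwise_cons, List.forall_mem_map]
    refine ⟨fun d hd => ?_, pairwise_coprime_of_orderOf_eq (b := b) (by decide) fun d hd => ?_⟩
    · obtain ⟨hp, hp5, hord⟩ := hP d hd
      exact coprime_of_orderOf_ne_one (by omega) hp hp5 (by simp [hS] at hd; omega)
    · exact ⟨(hP d hd).1, (hP d hd).2.2⟩

end SierpinskiRiesel

theorem infinitely_many_sierpinski_riesel_type_general
    (b : ℤ) (hb : 2 ≤ b) (α β : ℤ) :
    {t : ℕ | 0 < t ∧ Int.gcd ((t : ℤ) * b ^ t + α + β) (b - 1) = 1 ∧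
      ∀ n : ℕ, 0 < n → IsComposite (((t : ℤ) * b ^ t + α) * b ^ n + β)}.Infinite := by
  obtain rfl | hb3 := hb.eq_or_lt
  · exact SierpinskiRiesel.sierpinskiRieselSet_two_infinite α β
  · lift b to ℕ using (by omega)
    exact SierpinskiRiesel.sierpinskiRieselSet_infinite_of_three_le (by omega) α β

theorem infinitely_many_sierpinski_riesel_type
    (b : ℤ) (hb : 2 ≤ b) (α β : ℤ) (hαβ : α * β ≠ 0) :
    {t : ℕ | 0 < t ∧ Int.gcd ((t : ℤ) * b ^ t + α + β) (b - 1) = 1 ∧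
      ∀ n : ℕ, 0 < n → IsComposite (((t : ℤ) * b ^ t + α) * b ^ n + β)}.Infinite :=
  infinitely_many_sierpinski_riesel_type_general b hb α β
end

section
/- For any integer b ≥ 2, there exist infinitely many positive integers t such that the b-Woodall number t·b^t − 1 is a b-Sierpiński number. -/
/-!
Write `k = t * b ^ t - 1`, so that `k * b ^ n + 1 = t * b ^ (t + n) - b ^ n + 1`. Let `p` be a prime
with `b ^ d ≡ 1 [MOD p]`. If `t ≡ 1 [MOD d]`, this number only depends on `n` modulo `d` and on `t`
modulo `p`, and for `n ≡ r [MOD d]` it is divisible by `p` as soon as `t` lies in one residue class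
modulo `p`. Given a covering system `n ≡ r_i [MOD d_i]` of the exponents with such primes `p_i`,
pairwise distinct and prime to the `d_i`, the Chinese remainder theorem yields an arithmetic
progression of `t` making every `k * b ^ n + 1` divisible by some `p_i`, hence composite once `t`
is large; asking also `t ≡ 1 [MOD b - 1]` gives `gcd (k + 1, b - 1) = 1`.

For `b = 2` the classical covering `1 mod 2, 0 mod 3, 2 mod 4, 4 mod 8, 8 mod 12, 16 mod 24` with
the primes `3, 7, 5, 17, 13, 241` does it. For `b ≥ 3` we use twelve classes whose moduli `d` are
divisors of `144`, and for `p_d` a prime divisor, other than `2` and `3`, of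
`Φ_d(b) = Φ_e(b ^ (d / e))` with `e ∈ {3, 4, 6}`; such a prime exists since `Φ_e(z)` is
`z ^ 2 + z + 1`, `z ^ 2 + 1` or `z ^ 2 - z + 1`, which exceeds `6` and is divisible neither by `4`
nor by `9`. Then `b` has order exactly `d` modulo `p_d`, so these primes are distinct.
-/

theorem exists_modEq_of_forall_lt {ι : Type*} {d r : ι → ℕ} {L : ℕ} (hL : 0 < L)
    (hd : ∀ i, d i ∣ L) (h : ∀ n < L, ∃ i, n ≡ r i [MOD d i]) (n : ℕ) :
    ∃ i, n ≡ r i [MOD d i] :=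
  let ⟨i, hi⟩ := h (n % L) (Nat.mod_lt n hL)
  ⟨i, ((Nat.mod_modEq n L).symm.of_dvd (hd i)).trans hi⟩

theorem Nat.infinite_setOf_forall_modEq {ι : Type*} [Fintype ι] (a s : ι → ℕ)
    (hs : ∀ i, s i ≠ 0) (hcop : Pairwise fun i j => Coprime (s i) (s j)) :
    {n | ∀ i, n ≡ a i [MOD s i]}.Infinite := by
  obtain ⟨k, hk⟩ := chineseRemainderOfFinset a s Finset.univ (fun i _ => hs i)
    fun i _ j _ hij => hcop hij
  have hprod : ∏ i, s i ≠ 0 := Finset.prod_ne_zero_iff.2 fun i _ => hs i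
  refine (frequently_atTop_iff_infinite.1 (frequently_modEq hprod k)).mono fun n hn i => ?_
  exact (Nat.ModEq.of_dvd (Finset.dvd_prod_of_mem s (Finset.mem_univ i)) hn).trans
    (hk i (Finset.mem_univ i))

theorem ZMod.natCast_ne_zero_of_pos_of_lt {n p : ℕ} (hn : 0 < n) (hnp : n < p) :
    (n : ZMod p) ≠ 0 := by
  rw [Ne, ZMod.natCast_eq_zero_iff]
  exact Nat.not_dvd_of_pos_of_lt hn hnp

theorem ZMod.exists_natCast_mul_sub_one_mul_pow_add_one_eq_zero {p : ℕ} [Fact p.Prime]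
    {x : ZMod p} (hx : x ≠ 0) (r : ℕ) : ∃ c : ℕ, ((c : ZMod p) * x - 1) * x ^ r + 1 = 0 :=
  ⟨((x ^ r - 1) / x ^ (r + 1)).val, by
    rw [ZMod.natCast_zmod_val]
    field_simp
    ring⟩

theorem Nat.exists_prime_five_le_dvd {N : ℕ} (h6 : 6 < N) (h4 : ¬ 4 ∣ N) (h9 : ¬ 9 ∣ N) :
    ∃ p, p.Prime ∧ 5 ≤ p ∧ p ∣ N := by
  obtain ⟨f, hf⟩ := gcd_dvd_left N 6
  have hf1 : f ≠ 1 := by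
    rintro rfl
    have := le_of_dvd (by norm_num) (gcd_dvd_right N 6)
    omega
  obtain ⟨p, hp, hpf⟩ := exists_prime_and_dvd hf1
  have hpN : p ∣ N := hpf.trans ⟨_, hf.trans (mul_comm _ _)⟩
  refine ⟨p, hp, not_lt.1 fun hp5 => ?_, hpN⟩
  have hpp : p ∣ 6 → p * p ∣ N := fun hp6 => hf ▸ mul_dvd_mul (dvd_gcd hpN hp6) hpf
  obtain rfl | rfl : p = 2 ∨ p = 3 := by interval_cases p <;> revert hp <;> decide
  exacts [h4 (hpp (by norm_num)), h9 (hpp (by norm_num))]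

theorem Int.exists_prime_five_le_intCast_eq_zero {N : ℤ} (h6 : 6 < N) (h4 : (N : ZMod 4) ≠ 0)
    (h9 : (N : ZMod 9) ≠ 0) : ∃ p : ℕ, p.Prime ∧ 5 ≤ p ∧ (N : ZMod p) = 0 := by
  lift N to ℕ using (by omega)
  simp only [Int.cast_natCast, ne_eq, ZMod.natCast_eq_zero_iff] at h4 h9 ⊢
  exact Nat.exists_prime_five_le_dvd (by exact_mod_cast h6) h4 h9

section OrderOf

variable {R : Type*} [CommRing R] {x : R}

theorem orderOf_eq_three_of_sq_add_self_add_one_eq_zero (h3 : (3 : R) ≠ 0)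
    (hx : x ^ 2 + x + 1 = 0) : orderOf x = 3 :=
  orderOf_eq_prime (by linear_combination (x - 1) * hx) fun h1 => h3 (by
    rw [h1] at hx; linear_combination hx)

theorem orderOf_eq_four_of_sq_add_one_eq_zero (h2 : (2 : R) ≠ 0) (hx : x ^ 2 + 1 = 0) :
    orderOf x = 4 :=
  orderOf_eq_prime_pow (p := 2) (n := 1) (fun h => h2 (by linear_combination hx - h))
    (by linear_combination (x ^ 2 - 1) * hx)

theorem orderOf_eq_six_of_sq_sub_self_add_one_eq_zero (h2 : (2 : R) ≠ 0) (h3 : (3 : R) ≠ 0)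
    (hx : x ^ 2 - x + 1 = 0) : orderOf x = 6 := by
  refine orderOf_eq_of_pow_and_pow_div_prime (by norm_num)
    (by linear_combination (x ^ 4 + x ^ 3 - x - 1) * hx) fun q hq hq6 => ?_
  obtain rfl | rfl : q = 2 ∨ q = 3 := (hq.dvd_mul.1 (show q ∣ 2 * 3 from hq6)).imp
    (Nat.prime_dvd_prime_iff_eq hq Nat.prime_two).1
    (Nat.prime_dvd_prime_iff_eq hq Nat.prime_three).1
  · exact fun h => h2 (by linear_combination (x + 1) * hx - h)
  · exact fun h => h3 (by linear_combination h - (x + 2) * (h - hx))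

end OrderOf

theorem orderOf_eq_mul_of_orderOf_pow {M : Type*} [Monoid M] {x : M} {e m k : ℕ} (he : 0 < e)
    (hm : m ∣ e ^ k) (hxm : orderOf (x ^ m) = e) : orderOf x = e * m := by
  have hm0 : 0 < m := Nat.pos_of_dvd_of_pos hm (pow_pos he k)
  refine orderOf_eq_of_pow_and_pow_div_prime (by positivity)
    (by rw [mul_comm, pow_mul, ← hxm, pow_orderOf_eq_one]) fun q hq hqd h => ?_
  obtain ⟨e', rfl⟩ : q ∣ e :=
    (hq.dvd_mul.1 hqd).elim id fun hqm => hq.dvd_of_dvd_pow (hqm.trans hm)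
  rw [mul_assoc, Nat.mul_div_cancel_left _ hq.pos, pow_mul'] at h
  have := Nat.le_of_dvd (Nat.pos_of_mul_pos_left he) (hxm ▸ orderOf_dvd_of_pow_eq_one h)
  nlinarith [hq.two_le, Nat.pos_of_mul_pos_left he]

theorem exists_prime_five_le_orderOf_intCast_eq {z : ℤ} (hz : 3 ≤ z) {e : ℕ}
    (he : e = 3 ∨ e = 4 ∨ e = 6) : ∃ p : ℕ, p.Prime ∧ 5 ≤ p ∧ orderOf (z : ZMod p) = e := by
  have h23 {p : ℕ} (hp : 5 ≤ p) : (2 : ZMod p) ≠ 0 ∧ (3 : ZMod p) ≠ 0 :=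
    ⟨by exact_mod_cast ZMod.natCast_ne_zero_of_pos_of_lt (n := 2) (by norm_num) (by omega),
      by exact_mod_cast ZMod.natCast_ne_zero_of_pos_of_lt (n := 3) (by norm_num) (by omega)⟩
  rcases he with rfl | rfl | rfl
  · obtain ⟨p, hp, hp5, hpz⟩ := Int.exists_prime_five_le_intCast_eq_zero (N := z ^ 2 + z + 1)
      (by nlinarith) (by push_cast; generalize (z : ZMod 4) = x; revert x; decide)
      (by push_cast; generalize (z : ZMod 9) = x; revert x; decide)
    push_cast at hpz
    exact ⟨p, hp, hp5, orderOf_eq_three_of_sq_add_self_add_one_eq_zero (h23 hp5).2 hpz⟩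
  · obtain ⟨p, hp, hp5, hpz⟩ := Int.exists_prime_five_le_intCast_eq_zero (N := z ^ 2 + 1)
      (by nlinarith) (by push_cast; generalize (z : ZMod 4) = x; revert x; decide)
      (by push_cast; generalize (z : ZMod 9) = x; revert x; decide)
    push_cast at hpz
    exact ⟨p, hp, hp5, orderOf_eq_four_of_sq_add_one_eq_zero (h23 hp5).1 hpz⟩
  · obtain ⟨p, hp, hp5, hpz⟩ := Int.exists_prime_five_le_intCast_eq_zero (N := z ^ 2 - z + 1)
      (by nlinarith) (by push_cast; generalize (z : ZMod 4) = x; revert x; decide)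
      (by push_cast; generalize (z : ZMod 9) = x; revert x; decide)
    push_cast at hpz
    exact ⟨p, hp, hp5, orderOf_eq_six_of_sq_sub_self_add_one_eq_zero (h23 hp5).1 (h23 hp5).2 hpz⟩

theorem exists_prime_five_le_orderOf_intCast_eq_mul {b : ℤ} (hb : 3 ≤ b) {e m k : ℕ}
    (he : e = 3 ∨ e = 4 ∨ e = 6) (hm : m ∣ e ^ k) :
    ∃ p : ℕ, p.Prime ∧ 5 ≤ p ∧ orderOf (b : ZMod p) = e * m := by
  have he0 : 0 < e := by omega
  have hm0 : 0 < m := Nat.pos_of_dvd_of_pos hm (pow_pos he0 k)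
  obtain ⟨p, hp, hp5, hord⟩ := exists_prime_five_le_orderOf_intCast_eq
    (le_self_pow₀ (by omega : (1 : ℤ) ≤ b) hm0.ne' |>.trans' hb) he
  push_cast at hord
  exact ⟨p, hp, hp5, orderOf_eq_mul_of_orderOf_pow he0 hm hord⟩

theorem natCast_mul_pow_sub_one_mul_pow_add_one_eq_zero {R : Type*} [CommRing R] {x : R}
    {d r n t : ℕ} (hx : x ^ d = 1) (ht : t ≡ 1 [MOD d]) (hn : n ≡ r [MOD d])
    (h : ((t : R) * x - 1) * x ^ r + 1 = 0) : ((t : R) * x ^ t - 1) * x ^ n + 1 = 0 := by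
  rwa [pow_eq_pow_of_modEq ht hx, pow_eq_pow_of_modEq hn hx, pow_one]

theorem isComposite_of_dvd_s9 {E m : ℤ} (hE : 1 < E) (hEm : E < m) (h : E ∣ m) : IsComposite m := by
  refine ⟨hE.trans hEm, fun hm => ?_⟩
  rw [Int.prime_iff_natAbs_prime] at hm
  rcases hm.eq_one_or_self_of_dvd _ (Int.natAbs_dvd_natAbs.2 h) with h1 | h1 <;> omega

theorem le_pow_sub_one_of_intCast_pow_eq_one {b : ℤ} {E d : ℕ} (hb : 2 ≤ b) (hd : 0 < d)
    (h : (b : ZMod E) ^ d = 1) : (E : ℤ) ≤ b ^ d - 1 := by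
  have hdvd : (E : ℤ) ∣ b ^ d - 1 := by
    rw [← ZMod.intCast_zmod_eq_zero_iff_dvd]
    push_cast
    rw [h, sub_self]
  have : 1 < b ^ d := one_lt_pow₀ (by omega) hd.ne'
  exact Int.le_of_dvd (by omega) hdvd

theorem isComposite_woodall_mul_pow_add_one {b : ℤ} {E d r n t : ℕ} (hb : 2 ≤ b) (hE : 1 < E)
    (hbE : (b : ZMod E) ^ d = 1) (ht : 1 < t) (htd : t ≡ 1 [MOD d]) (hn : n ≡ r [MOD d])
    (htE : ((t : ZMod E) * b - 1) * b ^ r + 1 = 0) :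
    IsComposite (((t : ℤ) * b ^ t - 1) * b ^ n + 1) := by
  have hd : 0 < d := Nat.pos_of_ne_zero fun hd => by
    simp only [hd, Nat.ModEq, Nat.mod_zero] at htd
    omega
  have hdt : d ≤ t - 1 := Nat.le_of_dvd (by omega) ((Nat.modEq_iff_dvd' ht.le).1 htd.symm)
  have hEb : (E : ℤ) ≤ b ^ d - 1 := le_pow_sub_one_of_intCast_pow_eq_one hb hd hbE
  have hdvd : (E : ℤ) ∣ ((t : ℤ) * b ^ t - 1) * b ^ n + 1 := by
    rw [← ZMod.intCast_zmod_eq_zero_iff_dvd]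
    push_cast
    exact natCast_mul_pow_sub_one_mul_pow_add_one_eq_zero hbE htd hn htE
  refine isComposite_of_dvd_s9 (by exact_mod_cast hE) ?_ hdvd
  have h1 : b ^ d ≤ b ^ t := pow_le_pow_right₀ (by omega) (by omega)
  have h2 : 1 ≤ b ^ n := one_le_pow₀ (by omega)
  have h3 : 1 ≤ b ^ t := one_le_pow₀ (by omega)
  have h4 : (2 : ℤ) ≤ t := by exact_mod_cast ht
  nlinarith [mul_le_mul_of_nonneg_left h2 (show (0 : ℤ) ≤ t * b ^ t - 1 by nlinarith)]

theorem isBSierpinski_woodall_of_covering {b : ℤ} {ι : Type*} {d r E : ι → ℕ} (hb : 2 ≤ b)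
    (hcover : ∀ n, ∃ i, n ≡ r i [MOD d i]) (hE : ∀ i, 1 < E i)
    (hbE : ∀ i, (b : ZMod (E i)) ^ d i = 1) {t : ℕ} (ht : 1 < t)
    (htd : ∀ i, t ≡ 1 [MOD d i]) (htE : ∀ i, ((t : ZMod (E i)) * b - 1) * b ^ r i + 1 = 0)
    (htb : (t : ℤ) ≡ 1 [ZMOD b - 1]) : IsBSierpinski b (t * b ^ t - 1) := by
  refine ⟨?_, ?_, fun n _ => ?_⟩
  · have : 1 ≤ b ^ t := one_le_pow₀ (by omega)
    have h4 : (2 : ℤ) ≤ t := by exact_mod_cast ht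
    nlinarith
  · have hbb : b ≡ 1 [ZMOD b - 1] := Int.modEq_iff_dvd.2 ⟨-1, by ring⟩
    obtain ⟨q, hq⟩ := Int.modEq_iff_dvd.1 (htb.mul (hbb.pow t))
    rw [← Int.isCoprime_iff_gcd_eq_one]
    exact ⟨1, q, by rw [one_pow] at hq; linarith⟩
  · obtain ⟨i, hi⟩ := hcover n
    exact isComposite_woodall_mul_pow_add_one hb (hE i) (hbE i) ht (htd i) hi (htE i)

theorem infinite_setOf_woodall_isBSierpinski_of_covering {b : ℤ} {ι : Type*} {d r E : ι → ℕ}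
    (hb : 2 ≤ b) (hcover : ∀ n, ∃ i, n ≡ r i [MOD d i]) (hE : ∀ i, 1 < E i)
    (hbE : ∀ i, (b : ZMod (E i)) ^ d i = 1)
    (hS : {t : ℕ | (∀ i, t ≡ 1 [MOD d i]) ∧
      (∀ i, ((t : ZMod (E i)) * b - 1) * b ^ r i + 1 = 0) ∧ (t : ℤ) ≡ 1 [ZMOD b - 1]}.Infinite) :
    {t : ℕ | 0 < t ∧ IsBSierpinski b ((t : ℤ) * b ^ t - 1)}.Infinite := by
  refine (hS.sdiff (Set.finite_le_nat 1)).mono ?_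
  rintro t ⟨⟨htd, htE, htb⟩, ht⟩
  have ht : 1 < t := not_le.1 ht
  exact ⟨by omega, isBSierpinski_woodall_of_covering hb hcover hE hbE ht htd htE htb⟩

theorem infinite_setOf_woodall_congruences {b : ℤ} {ι : Type*} [Fintype ι] {d r p : ι → ℕ}
    (hb : 2 ≤ b) (hp : ∀ i, (p i).Prime) (hord : ∀ i, orderOf (b : ZMod (p i)) = d i)
    (hd : Function.Injective d) (hd1 : ∀ i, 1 < d i) {L : ℕ} (hL0 : 0 < L) (hL : ∀ i, d i ∣ L)
    (hpL : ∀ i, L.Coprime (p i)) :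
    {t : ℕ | (∀ i, t ≡ 1 [MOD d i]) ∧
      (∀ i, ((t : ZMod (p i)) * b - 1) * b ^ r i + 1 = 0) ∧ (t : ℤ) ≡ 1 [ZMOD b - 1]}.Infinite := by
  have hc (i : ι) : ∃ c : ℕ, ((c : ZMod (p i)) * b - 1) * b ^ r i + 1 = 0 := by
    have := Fact.mk (hp i)
    refine ZMod.exists_natCast_mul_sub_one_mul_pow_add_one_eq_zero (fun h => ?_) (r i)
    have := pow_orderOf_eq_one (b : ZMod (p i))
    rw [hord, h, zero_pow (by have := hd1 i; omega)] at this
    exact zero_ne_one this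
  choose c hc using hc
  have hpb (i : ι) : ¬ p i ∣ (b - 1).toNat := fun h => by
    have h1 : (b : ZMod (p i)) = 1 := by
      rw [← sub_eq_zero, ← Int.cast_one, ← Int.cast_sub, ZMod.intCast_zmod_eq_zero_iff_dvd,
        ← Int.toNat_of_nonneg (by omega : 0 ≤ b - 1)]
      exact_mod_cast h
    have := hord i
    rw [h1, orderOf_one] at this
    exact (hd1 i).ne this
  have hcop : Pairwise fun o o' : Option ι =>
      Nat.Coprime (o.elim (L * (b - 1).toNat) p) (o'.elim (L * (b - 1).toNat) p) := by
    have hLp (i : ι) : Nat.Coprime (L * (b - 1).toNat) (p i) :=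
      (hpL i).mul_left ((Nat.coprime_comm.1 ((hp i).coprime_iff_not_dvd.2 (hpb i))))
    rintro (_ | i) (_ | j) hij
    · exact absurd rfl hij
    · exact hLp j
    · exact (hLp i).symm
    · refine (Nat.coprime_primes (hp i) (hp j)).2 fun h => hij (congrArg some (hd ?_))
      rw [← hord, ← hord, h]
  refine (Nat.infinite_setOf_forall_modEq (fun o => o.elim 1 c) _
    (fun o => ?_) hcop).mono fun t ht => ⟨fun i => ?_, fun i => ?_, ?_⟩
  · cases o
    · exact mul_ne_zero hL0.ne' (by omega)
    · exact (hp _).ne_zero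
  · exact (ht none).of_dvd ((hL i).mul_right _)
  · rw [(ZMod.natCast_eq_natCast_iff t (c i) (p i)).2 (ht (some i))]
    exact hc i
  · have := Int.natCast_modEq_iff.2 ((ht none).of_dvd (dvd_mul_left _ _))
    rwa [Int.toNat_of_nonneg (by omega)] at this

theorem infinite_setOf_woodall_isBSierpinski_two :
    {t : ℕ | 0 < t ∧ IsBSierpinski 2 ((t : ℤ) * 2 ^ t - 1)}.Infinite := by
  refine infinite_setOf_woodall_isBSierpinski_of_covering (d := ![2, 3, 4, 8, 12, 24])
    (r := ![1, 0, 2, 4, 8, 16]) (E := ![3, 7, 5, 17, 13, 241]) le_rfl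
    (exists_modEq_of_forall_lt (L := 24) (by norm_num) (by decide) (by decide)) (by decide)
    (by decide) ?_
  -- `7058401` solves `t ≡ 1 [MOD 24]` and the six congruences modulo `3, 7, 5, 17, 13, 241`.
  refine (Nat.frequently_atTop_iff_infinite.1 (Nat.frequently_modEq (n := 44739240) (by norm_num)
    7058401)).mono fun t ht => ⟨fun i => ?_, fun i => ?_, Int.modEq_one⟩
  · exact ht.of_dvd (by fin_cases i <;> norm_num) |>.trans (by fin_cases i <;> decide)
  · rw [(ZMod.natCast_eq_natCast_iff _ _ _).2 (ht.of_dvd (by fin_cases i <;> norm_num))]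
    fin_cases i <;> decide

set_option maxRecDepth 4000 in
theorem infinite_setOf_woodall_isBSierpinski_of_three_le {b : ℤ} (hb : 3 ≤ b) :
    {t : ℕ | 0 < t ∧ IsBSierpinski b ((t : ℤ) * b ^ t - 1)}.Infinite := by
  let e : Fin 12 → ℕ := ![3, 3, 4, 4, 4, 6, 6, 6, 6, 6, 6, 6]
  let m : Fin 12 → ℕ := ![1, 3, 1, 2, 4, 1, 2, 3, 4, 6, 8, 12]
  let r : Fin 12 → ℕ := ![0, 4, 1, 7, 11, 2, 10, 10, 11, 16, 19, 19]
  have hprime (i : Fin 12) : ∃ p : ℕ, p.Prime ∧ 5 ≤ p ∧ orderOf (b : ZMod p) = e i * m i :=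
    exists_prime_five_le_orderOf_intCast_eq_mul hb (k := 3) (by fin_cases i <;> simp [e])
      (by fin_cases i <;> decide)
  choose p hp hp5 hord using hprime
  have hp144 (i : Fin 12) : Nat.Coprime 144 (p i) := by
    have h2 := (Nat.coprime_primes Nat.prime_two (hp i)).2 (by have := hp5 i; omega)
    have h3 := (Nat.coprime_primes Nat.prime_three (hp i)).2 (by have := hp5 i; omega)
    exact (h2.pow_left 4).mul_left (h3.pow_left 2)
  refine infinite_setOf_woodall_isBSierpinski_of_covering (by omega)
    (exists_modEq_of_forall_lt (L := 144) (r := r) (by norm_num) (by decide) (by decide))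
    (fun i => (hp i).one_lt) (fun i => hord i ▸ pow_orderOf_eq_one _) ?_
  exact infinite_setOf_woodall_congruences (by omega) hp hord (by decide) (by decide)
    (by norm_num) (by decide) hp144

theorem infinitely_many_woodall_b_sierpinski (b : ℤ) (hb : 2 ≤ b) :
    {t : ℕ | 0 < t ∧ IsBSierpinski b ((t : ℤ) * b ^ t - 1)}.Infinite := by
  obtain rfl | hb3 := hb.eq_or_lt
  · exact infinite_setOf_woodall_isBSierpinski_two
  · exact infinite_setOf_woodall_isBSierpinski_of_three_le hb3
end

section
/- Let b ≥ 2 be an integer, let {r_i (mod m_i) : 1 ≤ i ≤ ν} be a covering system of the integers, and let p_1, …, p_ν be pairwise distinct primes such that p_i divides b^{m_i} − 1 for each 1 ≤ i ≤ ν. If k is a positive integer such that, for each 1 ≤ i ≤ ν, k > p_i and p_i divides k·b^{r_i} + 1, then k·b^n + 1 is composite for all positive integers n. -/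
theorem Int.pow_modEq_pow_mod {q b : ℤ} {m : ℕ} (hb : q ∣ b ^ m - 1) (n : ℕ) :
    b ^ n ≡ b ^ (n % m) [ZMOD q] := by
  have hbm : b ^ m ≡ 1 [ZMOD q] := (Int.modEq_iff_dvd.2 hb).symm
  calc b ^ n = (b ^ m) ^ (n / m) * b ^ (n % m) := by rw [← pow_mul, ← pow_add, Nat.div_add_mod]
    _ ≡ 1 ^ (n / m) * b ^ (n % m) [ZMOD q] := (hbm.pow _).mul_right _
    _ = b ^ (n % m) := by rw [one_pow, one_mul]

theorem Int.pow_modEq_pow_of_modEq {q b : ℤ} {m n r : ℕ} (hb : q ∣ b ^ m - 1)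
    (h : (n : ℤ) ≡ r [ZMOD m]) : b ^ n ≡ b ^ r [ZMOD q] := by
  have hnr : n % m = r % m := Int.natCast_modEq_iff.1 h
  calc b ^ n ≡ b ^ (n % m) [ZMOD q] := Int.pow_modEq_pow_mod hb n
    _ = b ^ (r % m) := by rw [hnr]
    _ ≡ b ^ r [ZMOD q] := (Int.pow_modEq_pow_mod hb r).symm

theorem isComposite_of_dvd_s15 {d N : ℤ} (hd : d ∣ N) (h2 : 2 ≤ d) (hlt : d < N) :
    IsComposite N := by
  refine ⟨by omega, fun hN => ?_⟩
  refine Nat.not_prime_of_dvd_of_lt (Int.natAbs_dvd_natAbs.2 hd) ?_ ?_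
    (Int.prime_iff_natAbs_prime.1 hN) <;> omega

theorem composite_plus_one_of_covering_general
    (b : ℤ) (hb : 2 ≤ b) (ν : ℕ) (r : Fin ν → ℕ) (m : Fin ν → ℕ)
    (hcov : ∀ n : ℤ, ∃ i, n ≡ (r i : ℤ) [ZMOD (m i : ℤ)])
    (p : Fin ν → ℕ) (hp : ∀ i, (p i).Prime)
    (hdvd : ∀ i, (p i : ℤ) ∣ b ^ (m i) - 1)
    (k : ℤ)
    (hkp : ∀ i, (p i : ℤ) < k ∧ (p i : ℤ) ∣ k * b ^ (r i) + 1) :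
    ∀ n : ℕ, 0 < n → IsComposite (k * b ^ n + 1) := by
  intro n _
  obtain ⟨i, hi⟩ := hcov n
  obtain ⟨hpk, hpr⟩ := hkp i
  have hpn : (p i : ℤ) ∣ k * b ^ n + 1 := by
    have hcongr : k * b ^ n + 1 ≡ k * b ^ r i + 1 [ZMOD p i] :=
      ((Int.pow_modEq_pow_of_modEq (hdvd i) hi).mul_left k).add_right 1
    exact Int.modEq_zero_iff_dvd.1 (hcongr.trans (Int.modEq_zero_iff_dvd.2 hpr))
  have hp2 : 2 ≤ (p i : ℤ) := by exact_mod_cast (hp i).two_le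
  have hbn : 1 ≤ b ^ n := one_le_pow₀ (by omega)
  exact isComposite_of_dvd_s15 hpn hp2 (by nlinarith)

theorem composite_plus_one_of_covering
    (b : ℤ) (hb : 2 ≤ b) (ν : ℕ) (r : Fin ν → ℕ) (m : Fin ν → ℕ)
    (hm : ∀ i, 1 ≤ m i)
    (hcov : ∀ n : ℤ, ∃ i, n ≡ (r i : ℤ) [ZMOD (m i : ℤ)])
    (p : Fin ν → ℕ) (hp : ∀ i, (p i).Prime)
    (hinj : Function.Injective p)
    (hdvd : ∀ i, (p i : ℤ) ∣ b ^ (m i) - 1)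
    (k : ℤ) (hk : 0 < k)
    (hkp : ∀ i, (p i : ℤ) < k ∧ (p i : ℤ) ∣ k * b ^ (r i) + 1) :
    ∀ n : ℕ, 0 < n → IsComposite (k * b ^ n + 1) :=
  composite_plus_one_of_covering_general b hb ν r m hcov p hp hdvd k hkp
end

section
/- Let b ≥ 2 be an integer, let {r_i (mod m_i) : 1 ≤ i ≤ ν} be a covering system of the integers, and let p_1, …, p_ν be pairwise distinct primes such that p_i divides b^{m_i} − 1 for each 1 ≤ i ≤ ν. If k is a positive integer such that, for each 1 ≤ i ≤ ν, k > p_i and p_i divides k·b^{r_i} − 1, then k·b^n − 1 is composite for all positive integers n. -/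
theorem pow_sub_one_dvd_pow_sub_pow_of_modEq {R : Type*} [CommRing R] (x : R) {m n r : ℕ}
    (h : n ≡ r [MOD m]) : x ^ m - 1 ∣ x ^ n - x ^ r := by
  wlog hrn : r ≤ n generalizing n r
  · exact dvd_sub_comm.mp (this h.symm (le_of_not_ge hrn))
  obtain ⟨t, ht⟩ := (Nat.modEq_iff_dvd' hrn).mp h.symm
  have hn : n = r + m * t := by omega
  have hsplit : x ^ n - x ^ r = x ^ r * ((x ^ m) ^ t - 1 ^ t) := by
    rw [hn, pow_add, pow_mul]; ring
  rw [hsplit]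
  exact (sub_dvd_pow_sub_pow (x ^ m) 1 t).mul_left _

theorem not_prime_of_dvd_of_lt {q N : ℤ} (hq : 1 < q) (hdvd : q ∣ N) (hlt : q < N) :
    ¬ Prime N := by
  intro hN
  lift q to ℕ using by omega
  lift N to ℕ using by omega
  have hN' : N.Prime := by simpa using Int.prime_iff_natAbs_prime.mp hN
  rcases hN'.eq_one_or_self_of_dvd q (Int.natCast_dvd_natCast.mp hdvd) with h | h <;> omega

theorem composite_minus_one_of_covering_general
    (b : ℤ) (hb : 2 ≤ b) (ν : ℕ) (r : Fin ν → ℕ) (m : Fin ν → ℕ)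
    (hcov : ∀ n : ℤ, ∃ i, n ≡ (r i : ℤ) [ZMOD (m i : ℤ)])
    (p : Fin ν → ℕ) (hp : ∀ i, (p i).Prime)
    (hdvd : ∀ i, (p i : ℤ) ∣ b ^ (m i) - 1)
    (k : ℤ)
    (hkp : ∀ i, (p i : ℤ) < k ∧ (p i : ℤ) ∣ k * b ^ (r i) - 1) :
    ∀ n : ℕ, 0 < n → IsComposite (k * b ^ n - 1) := by
  intro n hn
  obtain ⟨i, hi⟩ := hcov n
  obtain ⟨hpk, hpkr⟩ := hkp i
  have hpn : (p i : ℤ) ∣ b ^ n - b ^ r i :=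
    (hdvd i).trans (pow_sub_one_dvd_pow_sub_pow_of_modEq b (Int.natCast_modEq_iff.mp hi))
  have hpN : (p i : ℤ) ∣ k * b ^ n - 1 := by
    rw [show k * b ^ n - 1 = k * (b ^ n - b ^ r i) + (k * b ^ r i - 1) by ring]
    exact dvd_add (hpn.mul_left k) hpkr
  have hp1 : (1 : ℤ) < p i := by exact_mod_cast (hp i).one_lt
  have hbn : 2 ≤ b ^ n := hb.trans (le_self_pow₀ (by omega) hn.ne')
  have hpltN : (p i : ℤ) < k * b ^ n - 1 := by nlinarith
  exact ⟨by omega, not_prime_of_dvd_of_lt hp1 hpN hpltN⟩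

theorem composite_minus_one_of_covering
    (b : ℤ) (hb : 2 ≤ b) (ν : ℕ) (r : Fin ν → ℕ) (m : Fin ν → ℕ)
    (hm : ∀ i, 1 ≤ m i)
    (hcov : ∀ n : ℤ, ∃ i, n ≡ (r i : ℤ) [ZMOD (m i : ℤ)])
    (p : Fin ν → ℕ) (hp : ∀ i, (p i).Prime)
    (hinj : Function.Injective p)
    (hdvd : ∀ i, (p i : ℤ) ∣ b ^ (m i) - 1)
    (k : ℤ) (hk : 0 < k)
    (hkp : ∀ i, (p i : ℤ) < k ∧ (p i : ℤ) ∣ k * b ^ (r i) - 1) :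
    ∀ n : ℕ, 0 < n → IsComposite (k * b ^ n - 1) :=
  composite_minus_one_of_covering_general b hb ν r m hcov p hp hdvd k hkp
end

section
/- Let m ≥ 2 be an integer, let q be an odd prime with q ≤ m + 1, and let a_0, a_1, …, a_{q−1} be integers satisfying a_j ≡ j (mod q) and a_j ≡ 2^m − 1 (mod 2^j) for 0 ≤ j ≤ q − 1. Then the collection of congruences {2^{j−1} − 1 (mod 2^j) : 1 ≤ j ≤ q − 1} ∪ {a_j (mod q·2^j) : 0 ≤ j ≤ q − 1} is a covering system of the integers; that is, every integer satisfies at least one of these congruences. -/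
/-!
If `2 ^ (q - 1)` does not divide `n + 1`, then `n + 1` has 2-adic valuation `j - 1 < q - 1`, i.e.
`n ≡ 2 ^ (j - 1) - 1 (mod 2 ^ j)`. Otherwise `n ≡ -1 (mod 2 ^ (q - 1))`; taking `j ≡ n (mod q)`
with `j < q`, both `n` and `a j` are `≡ j (mod q)` and `≡ -1 (mod 2 ^ j)` (as `j ≤ m`), so the
Chinese remainder theorem gives `n ≡ a j (mod q * 2 ^ j)`.
-/

lemma Int.modEq_two_pow_of_dvd_of_not_dvd {k : ℕ} {y : ℤ} (h : 2 ^ k ∣ y)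
    (h' : ¬ 2 ^ (k + 1) ∣ y) : y ≡ 2 ^ k [ZMOD 2 ^ (k + 1)] := by
  obtain ⟨u, rfl⟩ := h
  obtain ⟨c, rfl⟩ : Odd u := Int.not_even_iff_odd.mp fun ⟨c, hc⟩ ↦
    h' ⟨c, by rw [hc, pow_succ]; ring⟩
  exact Int.modEq_iff_dvd.mpr ⟨-c, by ring⟩

lemma Int.exists_modEq_two_pow_sub_one {x : ℤ} {t : ℕ} (h : ¬ 2 ^ t ∣ x + 1) :
    ∃ j, 1 ≤ j ∧ j ≤ t ∧ x ≡ 2 ^ (j - 1) - 1 [ZMOD 2 ^ j] := by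
  classical
  have hex : ∃ j, ¬ (2 : ℤ) ^ j ∣ x + 1 := ⟨t, h⟩
  set j := Nat.find hex
  have hj0 : j ≠ 0 := fun h0 ↦ Nat.find_spec hex (by simp [j, h0])
  have hdvd : (2 : ℤ) ^ (j - 1) ∣ x + 1 := not_not.mp (Nat.find_min hex (by omega))
  have hnot : ¬ (2 : ℤ) ^ (j - 1 + 1) ∣ x + 1 := by
    rw [Nat.sub_add_cancel (by omega)]; exact Nat.find_spec hex
  refine ⟨j, by omega, Nat.find_min' hex h, ?_⟩
  have := (Int.modEq_two_pow_of_dvd_of_not_dvd hdvd hnot).sub_right 1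
  rwa [Nat.sub_add_cancel (by omega), add_sub_cancel_right] at this

lemma Int.modEq_neg_one_of_dvd_add_one {n x : ℤ} (h : n ∣ x + 1) : x ≡ -1 [ZMOD n] :=
  (Int.modEq_iff_dvd.mpr (by simpa using h)).symm

lemma Int.exists_lt_modEq (x : ℤ) {q : ℕ} (hq : 0 < q) : ∃ j < q, x ≡ j [ZMOD q] := by
  have := Int.emod_lt_of_pos x (Int.natCast_pos.mpr hq)
  refine ⟨(x % q).toNat, by omega, ?_⟩
  rw [Int.toNat_of_nonneg (Int.emod_nonneg x (by omega))]
  exact (Int.mod_modEq x q).symm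

lemma Int.modEq_mul_two_pow_of_odd {q j : ℕ} (hq : Odd q) {x y : ℤ} (h₁ : x ≡ y [ZMOD q])
    (h₂ : x ≡ y [ZMOD 2 ^ j]) : x ≡ y [ZMOD q * 2 ^ j] :=
  (Int.modEq_and_modEq_iff_modEq_mul
    (by simpa [Int.natAbs_pow] using hq.coprime_two_right.pow_right j)).mp ⟨h₁, h₂⟩

theorem covering_from_powers_of_two_general
    (m : ℕ) (q : ℕ) (hqodd : Odd q) (hqm : q ≤ m + 1)
    (a : ℕ → ℤ)
    (ha1 : ∀ j, j ≤ q - 1 → a j ≡ (j : ℤ) [ZMOD (q : ℤ)])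
    (ha2 : ∀ j, j ≤ q - 1 → a j ≡ 2 ^ m - 1 [ZMOD (2 : ℤ) ^ j]) :
    ∀ n : ℤ,
      (∃ j, 1 ≤ j ∧ j ≤ q - 1 ∧ n ≡ 2 ^ (j - 1) - 1 [ZMOD (2 : ℤ) ^ j]) ∨
      (∃ j, j ≤ q - 1 ∧ n ≡ a j [ZMOD (q : ℤ) * 2 ^ j]) := by
  intro n
  by_cases h : (2 : ℤ) ^ (q - 1) ∣ n + 1
  · obtain ⟨j, hjq, hnj⟩ := Int.exists_lt_modEq n hqodd.pos
    have hj : j ≤ q - 1 := by omega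
    have hn : n ≡ -1 [ZMOD 2 ^ j] :=
      Int.modEq_neg_one_of_dvd_add_one ((pow_dvd_pow 2 hj).trans h)
    have ha : a j ≡ -1 [ZMOD 2 ^ j] :=
      (ha2 j hj).trans (Int.modEq_neg_one_of_dvd_add_one (by simpa using pow_dvd_pow 2 (by omega)))
    exact .inr ⟨j, hj,
      Int.modEq_mul_two_pow_of_odd hqodd (hnj.trans (ha1 j hj).symm) (hn.trans ha.symm)⟩
  · exact .inl (Int.exists_modEq_two_pow_sub_one h)

theorem covering_from_powers_of_two
    (m : ℕ) (hm : 2 ≤ m) (q : ℕ) (hq : q.Prime) (hqodd : Odd q) (hqm : q ≤ m + 1)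
    (a : ℕ → ℤ)
    (ha1 : ∀ j, j ≤ q - 1 → a j ≡ (j : ℤ) [ZMOD (q : ℤ)])
    (ha2 : ∀ j, j ≤ q - 1 → a j ≡ 2 ^ m - 1 [ZMOD (2 : ℤ) ^ j]) :
    ∀ n : ℤ,
      (∃ j, 1 ≤ j ∧ j ≤ q - 1 ∧ n ≡ 2 ^ (j - 1) - 1 [ZMOD (2 : ℤ) ^ j]) ∨
      (∃ j, j ≤ q - 1 ∧ n ≡ a j [ZMOD (q : ℤ) * 2 ^ j]) :=
  covering_from_powers_of_two_general m q hqodd hqm a ha1 ha2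
end

section
/- Let q ≥ 5 be a prime. Consider the following collection of congruences: (i) for each 1 ≤ k ≤ q, the class 3^{k−1} (mod 3^k); (ii) for each 1 ≤ j ≤ q and 1 ≤ k ≤ q, the class A (mod 2^j·3^k) where A is the unique residue modulo 2^j·3^k with A ≡ 2^{j−1} (mod 2^j) and A ≡ 2·3^{k−1} (mod 3^k); (iii) for each 1 ≤ j ≤ q and 1 ≤ k ≤ q, the class A (mod 2^j·3^k·q) where A is the unique residue modulo 2^j·3^k·q with A ≡ 0 (mod 2^j), A ≡ 2·3^{k−1} (mod 3^k), and A ≡ j (mod q); (iv) for each 1 ≤ k ≤ q, the class A (mod 3^k·q) where A is the unique residue modulo 3^k·q with A ≡ 0 (mod 3^k) and A ≡ k (mod q). Then this collection is a covering system of the integers; that is, every integer satisfies at least one of these congruences. -/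
/-!
Split on the 3-adic valuation of `n`. If `3 ^ q ∣ n`, a class of type (iv) catches `n`: choose
`k ∈ [1, q]` with `k ≡ n (mod q)`. Otherwise `n = 3 ^ (k - 1) * m` with `k ≤ q` and `m ≡ 1` or
`m ≡ 2 (mod 3)`. In the first case (i) applies. In the second, split on the 2-adic valuation:
if `2 ^ q ∣ n`, a class of type (iii) with `j ≡ n (mod q)` applies; otherwise
`n ≡ 2 ^ (j - 1) (mod 2 ^ j)` for some `j ≤ q`, which is (ii).
-/

namespace Int

theorem exists_mem_Icc_modEq (n : ℤ) {q : ℕ} (hq : 0 < q) :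
    ∃ k : ℕ, 1 ≤ k ∧ k ≤ q ∧ n ≡ k [ZMOD q] := by
  have hq' : (0 : ℤ) < q := by exact_mod_cast hq
  have hr0 := Int.emod_nonneg (n - 1) hq'.ne'
  have hrq := Int.emod_lt_of_pos (n - 1) hq'
  refine ⟨((n - 1) % q).toNat + 1, by omega, by omega, ?_⟩
  have h := ((Int.mod_modEq (n - 1) q).add_right 1).symm
  rw [sub_add_cancel] at h
  simpa [Int.toNat_of_nonneg hr0] using h

theorem exists_eq_pow_pred_mul_of_not_dvd {p n : ℤ} {q : ℕ} (h : ¬ p ^ q ∣ n) :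
    ∃ k, 1 ≤ k ∧ k ≤ q ∧ ∃ m, n = p ^ (k - 1) * m ∧ ¬ p ∣ m := by
  induction q with
  | zero => simp at h
  | succ q ih =>
    by_cases hdvd : p ^ q ∣ n
    · obtain ⟨m, rfl⟩ := hdvd
      refine ⟨q + 1, by omega, le_rfl, m, rfl, ?_⟩
      rintro ⟨c, rfl⟩
      exact h ⟨c, by ring⟩
    · obtain ⟨k, hk1, hkq, hm⟩ := ih hdvd
      exact ⟨k, hk1, by omega, hm⟩

theorem pow_pred_mul_modEq {p m c : ℤ} {k : ℕ} (hk : 1 ≤ k) (h : m ≡ c [ZMOD p]) :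
    p ^ (k - 1) * m ≡ p ^ (k - 1) * c [ZMOD p ^ k] := by
  obtain ⟨k, rfl⟩ := Nat.exists_eq_add_of_le' hk
  simpa [pow_succ] using h.mul_left' (c := p ^ k)

end Int

open Int

theorem three_pow_dvd_or_modEq (n : ℤ) (q : ℕ) :
    3 ^ q ∣ n ∨ ∃ k, 1 ≤ k ∧ k ≤ q ∧
      (n ≡ 3 ^ (k - 1) [ZMOD 3 ^ k] ∨ n ≡ 2 * 3 ^ (k - 1) [ZMOD 3 ^ k]) := by
  refine or_iff_not_imp_left.2 fun h => ?_
  obtain ⟨k, hk1, hkq, m, rfl, hm⟩ := exists_eq_pow_pred_mul_of_not_dvd h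
  refine ⟨k, hk1, hkq, ?_⟩
  have hm' : m ≡ 1 [ZMOD 3] ∨ m ≡ 2 [ZMOD 3] := by unfold Int.ModEq; omega
  rcases hm' with h1 | h2
  · simpa using Or.inl (pow_pred_mul_modEq hk1 h1)
  · simpa [mul_comm] using Or.inr (pow_pred_mul_modEq hk1 h2)

theorem two_pow_dvd_or_modEq (n : ℤ) (q : ℕ) :
    2 ^ q ∣ n ∨ ∃ j, 1 ≤ j ∧ j ≤ q ∧ n ≡ 2 ^ (j - 1) [ZMOD 2 ^ j] := by
  refine or_iff_not_imp_left.2 fun h => ?_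
  obtain ⟨j, hj1, hjq, m, rfl, hm⟩ := exists_eq_pow_pred_mul_of_not_dvd h
  have hm' : m ≡ 1 [ZMOD 2] := by unfold Int.ModEq; omega
  exact ⟨j, hj1, hjq, by simpa using pow_pred_mul_modEq hj1 hm'⟩

theorem covering_without_modulus_two_general (q : ℕ) (hq : q.Prime) :
    ∀ n : ℤ,
      (∃ k, 1 ≤ k ∧ k ≤ q ∧ n ≡ 3 ^ (k - 1) [ZMOD (3 : ℤ) ^ k]) ∨
      (∃ j k, 1 ≤ j ∧ j ≤ q ∧ 1 ≤ k ∧ k ≤ q ∧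
        n ≡ 2 ^ (j - 1) [ZMOD (2 : ℤ) ^ j] ∧ n ≡ 2 * 3 ^ (k - 1) [ZMOD (3 : ℤ) ^ k]) ∨
      (∃ j k, 1 ≤ j ∧ j ≤ q ∧ 1 ≤ k ∧ k ≤ q ∧
        n ≡ 0 [ZMOD (2 : ℤ) ^ j] ∧ n ≡ 2 * 3 ^ (k - 1) [ZMOD (3 : ℤ) ^ k] ∧
        n ≡ (j : ℤ) [ZMOD (q : ℤ)]) ∨
      (∃ k, 1 ≤ k ∧ k ≤ q ∧ n ≡ 0 [ZMOD (3 : ℤ) ^ k] ∧ n ≡ (k : ℤ) [ZMOD (q : ℤ)]) := by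
  intro n
  rcases three_pow_dvd_or_modEq n q with h3 | ⟨k, hk1, hkq, h1 | h2⟩
  · obtain ⟨k, hk1, hkq, hkn⟩ := exists_mem_Icc_modEq n hq.pos
    refine .inr <| .inr <| .inr ⟨k, hk1, hkq, ?_, hkn⟩
    exact Int.modEq_zero_iff_dvd.2 ((pow_dvd_pow 3 hkq).trans h3)
  · exact .inl ⟨k, hk1, hkq, h1⟩
  rcases two_pow_dvd_or_modEq n q with h2q | ⟨j, hj1, hjq, hj⟩
  · obtain ⟨j, hj1, hjq, hjn⟩ := exists_mem_Icc_modEq n hq.pos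
    refine .inr <| .inr <| .inl ⟨j, k, hj1, hjq, hk1, hkq, ?_, h2, hjn⟩
    exact Int.modEq_zero_iff_dvd.2 ((pow_dvd_pow 2 hjq).trans h2q)
  · exact .inr <| .inl ⟨j, k, hj1, hjq, hk1, hkq, hj, h2⟩

theorem covering_without_modulus_two (q : ℕ) (hq : q.Prime) (hq5 : 5 ≤ q) :
    ∀ n : ℤ,
      (∃ k, 1 ≤ k ∧ k ≤ q ∧ n ≡ 3 ^ (k - 1) [ZMOD (3 : ℤ) ^ k]) ∨
      (∃ j k, 1 ≤ j ∧ j ≤ q ∧ 1 ≤ k ∧ k ≤ q ∧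
        n ≡ 2 ^ (j - 1) [ZMOD (2 : ℤ) ^ j] ∧ n ≡ 2 * 3 ^ (k - 1) [ZMOD (3 : ℤ) ^ k]) ∨
      (∃ j k, 1 ≤ j ∧ j ≤ q ∧ 1 ≤ k ∧ k ≤ q ∧
        n ≡ 0 [ZMOD (2 : ℤ) ^ j] ∧ n ≡ 2 * 3 ^ (k - 1) [ZMOD (3 : ℤ) ^ k] ∧
        n ≡ (j : ℤ) [ZMOD (q : ℤ)]) ∨
      (∃ k, 1 ≤ k ∧ k ≤ q ∧ n ≡ 0 [ZMOD (3 : ℤ) ^ k] ∧ n ≡ (k : ℤ) [ZMOD (q : ℤ)]) :=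
  covering_without_modulus_two_general q hq
end
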